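/- arXiv:1509.06234 — 4 statements merged into one kernel-verified Lean document; each statement's English description precedes it below -/
import Mathlib

section
/- Let m ≥ 1 and let Q_1 : [0,π] → ℂ^{m×m} be integrable with Q_1(x)† = −Q_1(x) a.e. Let P_+ and P_− be the absolutely continuous solutions of P_±′(x) = ±Q_1(x)P_±(x), P_±(0) = I on [0,π]. Then there exists a constant C > 0 such that for every real ρ with |ρ| ≥ 1, ‖∫₀^π e^{2iρx} P_+(x)† P_−(x) dx‖ ≤ C/|ρ|, and likewise ‖∫₀^π e^{−2iρx} P_−(x)† P_+(x) dx‖ ≤ C/|ρ|. -/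
/-!
Both `P₊ᴴ P₋` and `P₋ᴴ P₊` are absolutely continuous on `[0, π]`: they are `(A, B) ↦ Aᴴ B` applied
to primitives of integrable functions, and such a bilinear image is again a primitive, by the
product rule for primitives. One integration by parts against `e^{±2iρx}`, whose primitives are
bounded by `1/|ρ|`, then gives the `C/|ρ|` bound. Integration by parts for primitives of
integrable functions is Fubini's theorem on the triangle `{t ≤ x}`.
-/

open Matrix MeasureTheory Set

attribute [local instance] Matrix.normedAddCommGroup Matrix.normedSpace

section Primitive

variable {E₁ E₂ E₃ : Type*} [NormedAddCommGroup E₁] [NormedSpace ℝ E₁]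
  [NormedAddCommGroup E₂] [NormedSpace ℝ E₂] [NormedAddCommGroup E₃] [NormedSpace ℝ E₃]

theorem Integrable.bilin_prod {α β : Type*} [MeasurableSpace α] [MeasurableSpace β]
    {μ : Measure α} {ν : Measure β} [SFinite ν] (L : E₁ →L[ℝ] E₂ →L[ℝ] E₃)
    {u : α → E₁} {v : β → E₂} (hu : Integrable u μ) (hv : Integrable v ν) :
    Integrable (fun p : α × β => L (u p.1) (v p.2)) (μ.prod ν) := by
  refine ((hu.norm.mul_prod hv.norm).const_mul ‖L‖).mono'
    (L.aestronglyMeasurable_comp₂ hu.1.comp_fst hv.1.comp_snd) (.of_forall fun p => ?_)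
  rw [← mul_assoc]
  exact L.le_opNorm₂ _ _

theorem integrableOn_bilin_of_continuousOn_left (L : E₁ →L[ℝ] E₂ →L[ℝ] E₃) {f : ℝ → E₁}
    {g : ℝ → E₂} {s : Set ℝ} (hs : IsCompact s) (hf : ContinuousOn f s) (hg : IntegrableOn g s) :
    IntegrableOn (fun x => L (f x) (g x)) s := by
  obtain ⟨C, hC⟩ := hs.exists_bound_of_continuousOn hf
  exact L.integrable_of_bilin_of_bdd_left C (hf.aestronglyMeasurable hs.measurableSet)
    ((ae_restrict_iff' hs.measurableSet).2 (.of_forall hC)) hg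

theorem integrableOn_bilin_of_continuousOn_right (L : E₁ →L[ℝ] E₂ →L[ℝ] E₃) {f : ℝ → E₁}
    {g : ℝ → E₂} {s : Set ℝ} (hs : IsCompact s) (hf : IntegrableOn f s) (hg : ContinuousOn g s) :
    IntegrableOn (fun x => L (f x) (g x)) s :=
  integrableOn_bilin_of_continuousOn_left L.flip hs hg hf

theorem integral_Ioc_bilin_triangle_swap [CompleteSpace E₁] [CompleteSpace E₂] [CompleteSpace E₃]
    (L : E₁ →L[ℝ] E₂ →L[ℝ] E₃) {u : ℝ → E₁} {v : ℝ → E₂} {a b : ℝ}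
    (hu : IntegrableOn u (Ioc a b)) (hv : IntegrableOn v (Ioc a b)) :
    ∫ x in Ioc a b, L (u x) (∫ t in Ioc a x, v t) =
      ∫ t in Ioc a b, L (∫ x in Ioc t b, u x) (v t) := by
  set μ := volume.restrict (Ioc a b)
  set K : ℝ × ℝ → E₃ := {p | p.2 ≤ p.1}.indicator fun p => L (u p.1) (v p.2)
  have hK : Integrable K (μ.prod μ) :=
    (Integrable.bilin_prod L hu hv).indicator (measurableSet_le measurable_snd measurable_fst)
  calc ∫ x in Ioc a b, L (u x) (∫ t in Ioc a x, v t) = ∫ x, ∫ t, K (x, t) ∂μ ∂μ := by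
        refine setIntegral_congr_fun measurableSet_Ioc fun x hx => ?_
        have hset : Ioc a x = Iic x ∩ Ioc a b := by
          rw [inter_comm, Ioc_inter_Iic, min_eq_right hx.2]
        rw [hset, ← Measure.restrict_restrict measurableSet_Iic,
          ← integral_indicator measurableSet_Iic,
          ← (L (u x)).integral_comp_comm (hv.indicator measurableSet_Iic)]
        congr 1 with t
        by_cases ht : t ≤ x <;> simp [K, indicator, ht]
    _ = ∫ t, ∫ x, K (x, t) ∂μ ∂μ := integral_integral_swap hK
    _ = ∫ t in Ioc a b, L (∫ x in Ioc t b, u x) (v t) := by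
        refine (setIntegral_congr_fun measurableSet_Ioc fun t ht => ?_).symm
        have hset : Icc t b = Ici t ∩ Ioc a b := by
          ext x; simp only [mem_Icc, mem_inter_iff, mem_Ici, mem_Ioc]
          constructor
          · exact fun h => ⟨h.1, ht.1.trans_le h.1, h.2⟩
          · exact fun h => ⟨h.1, h.2.2⟩
        rw [← integral_Icc_eq_integral_Ioc, hset, ← L.flip_apply,
          ← Measure.restrict_restrict measurableSet_Ici, ← integral_indicator measurableSet_Ici,
          ← (L.flip (v t)).integral_comp_comm (hu.indicator measurableSet_Ici)]
        congr 1 with x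
        by_cases hx : t ≤ x <;> simp [K, indicator, hx]

theorem continuousOn_primitive_of_le {f : ℝ → E₁} {a b : ℝ} (hab : a ≤ b)
    (hf : IntegrableOn f (Icc a b)) :
    ContinuousOn (fun x => ∫ t in a..x, f t) (Icc a b) := by
  rw [← uIcc_of_le hab] at hf ⊢
  exact intervalIntegral.continuousOn_primitive_interval hf

theorem integral_bilin_primitive_parts [CompleteSpace E₁] [CompleteSpace E₂] [CompleteSpace E₃]
    (L : E₁ →L[ℝ] E₂ →L[ℝ] E₃) {u : ℝ → E₁} {v : ℝ → E₂} {a b : ℝ} (hab : a ≤ b)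
    (hu : IntegrableOn u (Icc a b)) (hv : IntegrableOn v (Icc a b)) :
    (∫ x in a..b, L (u x) (∫ t in a..x, v t)) + ∫ x in a..b, L (∫ t in a..x, u t) (v x) =
      L (∫ x in a..b, u x) (∫ x in a..b, v x) := by
  have hui : IntervalIntegrable u volume a b :=
    (intervalIntegrable_iff_integrableOn_Icc_of_le hab).2 hu
  have hvi : IntervalIntegrable v volume a b :=
    (intervalIntegrable_iff_integrableOn_Icc_of_le hab).2 hv
  have hUv : IntervalIntegrable (fun x => L (∫ t in a..x, u t) (v x)) volume a b :=
    (intervalIntegrable_iff_integrableOn_Icc_of_le hab).2 <|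
      integrableOn_bilin_of_continuousOn_left L isCompact_Icc
        (continuousOn_primitive_of_le hab hu) hv
  have hswap : ∫ x in a..b, L (u x) (∫ t in a..x, v t) =
      ∫ t in a..b, L ((∫ x in a..b, u x) - ∫ x in a..t, u x) (v t) := by
    rw [intervalIntegral.integral_of_le hab, intervalIntegral.integral_of_le hab]
    calc _ = ∫ x in Ioc a b, L (u x) (∫ t in Ioc a x, v t) :=
          setIntegral_congr_fun measurableSet_Ioc fun x hx => by
            rw [intervalIntegral.integral_of_le hx.1.le]
      _ = ∫ t in Ioc a b, L (∫ x in Ioc t b, u x) (v t) :=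
          integral_Ioc_bilin_triangle_swap L (hu.mono_set Ioc_subset_Icc_self)
            (hv.mono_set Ioc_subset_Icc_self)
      _ = _ := setIntegral_congr_fun measurableSet_Ioc fun t ht => by
            rw [intervalIntegral.integral_interval_sub_left hui (hui.mono_set ?_),
              intervalIntegral.integral_of_le ht.2]
            rw [uIcc_of_le hab, uIcc_of_le ht.1.le]
            exact Icc_subset_Icc_right ht.2
  have hconst : ∫ t in a..b, L (∫ x in a..b, u x) (v t) = L (∫ x in a..b, u x) (∫ x in a..b, v x) :=
    (L _).intervalIntegral_comp_comm hvi
  simp only [hswap, map_sub, _root_.sub_apply]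
  rw [intervalIntegral.integral_sub ⟨(L _).integrable_comp hvi.1, (L _).integrable_comp hvi.2⟩ hUv,
    hconst, sub_add_cancel]

/-- `F` is absolutely continuous on `[a, b]` with derivative `w` almost everywhere. -/
def IsPrimitiveOn (F w : ℝ → E₁) (a b : ℝ) : Prop :=
  IntegrableOn w (Icc a b) ∧ ∀ x ∈ Icc a b, F x = F a + ∫ t in a..x, w t

namespace IsPrimitiveOn

theorem continuousOn {F w : ℝ → E₁} {a b : ℝ} (hF : IsPrimitiveOn F w a b) :
    ContinuousOn F (Icc a b) := by
  have h : ContinuousOn (fun x => F a + ∫ t in Ioc a x, w t) (Icc a b) :=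
    continuousOn_const.add (intervalIntegral.continuousOn_primitive hF.1)
  exact h.congr fun x hx => by rw [hF.2 x hx, intervalIntegral.integral_of_le hx.1]

theorem bilin [CompleteSpace E₁] [CompleteSpace E₂] [CompleteSpace E₃]
    (L : E₁ →L[ℝ] E₂ →L[ℝ] E₃) {F f : ℝ → E₁} {G g : ℝ → E₂} {a b : ℝ}
    (hF : IsPrimitiveOn F f a b) (hG : IsPrimitiveOn G g a b) :
    IsPrimitiveOn (fun x => L (F x) (G x)) (fun t => L (f t) (G t) + L (F t) (g t)) a b := by
  refine ⟨(integrableOn_bilin_of_continuousOn_right L isCompact_Icc hF.1 hG.continuousOn).add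
    (integrableOn_bilin_of_continuousOn_left L isCompact_Icc hF.continuousOn hG.1), fun x hx => ?_⟩
  have hsub : Icc a x ⊆ Icc a b := Icc_subset_Icc_right hx.2
  have hf := hF.1.mono_set hsub
  have hg := hG.1.mono_set hsub
  have hfi : ∀ Y : ℝ → E₂, ContinuousOn Y (Icc a x) →
      IntervalIntegrable (fun t => L (f t) (Y t)) volume a x := fun Y hY =>
    (intervalIntegrable_iff_integrableOn_Icc_of_le hx.1).2
      (integrableOn_bilin_of_continuousOn_right L isCompact_Icc hf hY)
  have hgi : ∀ X : ℝ → E₁, ContinuousOn X (Icc a x) →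
      IntervalIntegrable (fun t => L (X t) (g t)) volume a x := fun X hX =>
    (intervalIntegrable_iff_integrableOn_Icc_of_le hx.1).2
      (integrableOn_bilin_of_continuousOn_left L isCompact_Icc hX hg)
  have hFG : ∀ t ∈ uIcc a x, L (f t) (G t) + L (F t) (g t) = L (f t) (G a) +
      L (f t) (∫ s in a..t, g s) + (L (F a) (g t) + L (∫ s in a..t, f s) (g t)) := by
    intro t ht
    rw [uIcc_of_le hx.1] at ht
    rw [hF.2 t (hsub ht), hG.2 t (hsub ht)]
    simp only [map_add, _root_.add_apply]
  have hcf : ∫ t in a..x, L (f t) (G a) = L (∫ t in a..x, f t) (G a) :=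
    (L.flip (G a)).intervalIntegral_comp_comm
      ((intervalIntegrable_iff_integrableOn_Icc_of_le hx.1).2 hf)
  have hcg : ∫ t in a..x, L (F a) (g t) = L (F a) (∫ t in a..x, g t) :=
    (L (F a)).intervalIntegral_comp_comm
      ((intervalIntegrable_iff_integrableOn_Icc_of_le hx.1).2 hg)
  show L (F x) (G x) = L (F a) (G a) + _
  have i₁ := hfi (fun _ => G a) continuousOn_const
  have i₂ := hfi _ (continuousOn_primitive_of_le hx.1 hg)
  have i₃ := hgi (fun _ => F a) continuousOn_const
  have i₄ := hgi _ (continuousOn_primitive_of_le hx.1 hf)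
  rw [intervalIntegral.integral_congr hFG, intervalIntegral.integral_add (i₁.add i₂) (i₃.add i₄),
    intervalIntegral.integral_add i₁ i₂, intervalIntegral.integral_add i₃ i₄, ← add_add_add_comm,
    integral_bilin_primitive_parts L hx.1 hf hg, hcf, hcg, hF.2 x hx, hG.2 x hx]
  simp only [map_add, _root_.add_apply]
  abel

end IsPrimitiveOn

end Primitive

section Oscillatory

open Complex

variable {E : Type*} [NormedAddCommGroup E] [NormedSpace ℂ E] [CompleteSpace E]

theorem norm_exp_mul_ofReal_of_re_eq_zero {c : ℂ} (hc : c.re = 0) (x : ℝ) :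
    ‖exp (c * x)‖ = 1 := by
  simp [norm_exp, hc]

theorem norm_integral_exp_mul_le {c : ℂ} (hc : c.re = 0) (hc0 : c ≠ 0) (a b : ℝ) :
    ‖∫ x in a..b, exp (c * x)‖ ≤ 2 / ‖c‖ := by
  rw [integral_exp_mul_complex hc0, norm_div]
  gcongr
  calc _ ≤ ‖exp (c * b)‖ + ‖exp (c * a)‖ := norm_sub_le _ _
    _ = 2 := by simp only [norm_exp_mul_ofReal_of_re_eq_zero hc]; norm_num

theorem IsPrimitiveOn.norm_integral_exp_smul_le {F w : ℝ → E} {a b : ℝ} (hab : a ≤ b)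
    (hF : IsPrimitiveOn F w a b) {c : ℂ} (hc : c.re = 0) (hc0 : c ≠ 0) :
    ‖∫ x in a..b, exp (c * x) • F x‖ ≤ 2 * (‖F a‖ + 2 * ∫ x in a..b, ‖w x‖) / ‖c‖ := by
  have hec : Continuous fun x : ℝ => exp (c * x) := by fun_prop
  have he : IntegrableOn (fun x : ℝ => exp (c * x)) (Icc a b) := hec.integrableOn_Icc
  have hparts := integral_bilin_primitive_parts (ContinuousLinearMap.lsmul ℝ ℂ) hab he hF.1
  simp only [ContinuousLinearMap.lsmul_apply] at hparts
  have hwi : IntervalIntegrable w volume a b :=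
    (intervalIntegrable_iff_integrableOn_Icc_of_le hab).2 hF.1
  have hsplit : ∫ x in a..b, exp (c * x) • F x =
      (∫ x in a..b, exp (c * x)) • F a + ∫ x in a..b, exp (c * x) • ∫ t in a..x, w t := by
    rw [← intervalIntegral.integral_smul_const, ← intervalIntegral.integral_add]
    · refine intervalIntegral.integral_congr fun x hx => ?_
      rw [uIcc_of_le hab] at hx
      simp only [hF.2 x hx, smul_add]
    · exact (hec.smul continuous_const).intervalIntegrable a b
    · refine ContinuousOn.intervalIntegrable ?_
      rw [uIcc_of_le hab]
      exact hec.continuousOn.smul (continuousOn_primitive_of_le hab hF.1)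
  have hE : ∀ x, ‖∫ t in a..x, exp (c * t)‖ ≤ 2 / ‖c‖ := norm_integral_exp_mul_le hc hc0 a
  have hrem : ‖∫ x in a..b, (∫ t in a..x, exp (c * t)) • w x‖ ≤ 2 / ‖c‖ * ∫ x in a..b, ‖w x‖ := by
    rw [← intervalIntegral.integral_const_mul]
    refine intervalIntegral.norm_integral_le_of_norm_le hab (.of_forall fun x _ => ?_)
      (hwi.norm.const_mul _)
    rw [norm_smul]
    exact mul_le_mul_of_nonneg_right (hE x) (norm_nonneg _)
  calc ‖∫ x in a..b, exp (c * x) • F x‖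
      = ‖(∫ x in a..b, exp (c * x)) • F a + ((∫ x in a..b, exp (c * x)) • (∫ x in a..b, w x) -
          ∫ x in a..b, (∫ t in a..x, exp (c * t)) • w x)‖ := by
        rw [hsplit, ← hparts, add_sub_cancel_right]
    _ ≤ 2 / ‖c‖ * ‖F a‖ + (2 / ‖c‖ * (∫ x in a..b, ‖w x‖) + 2 / ‖c‖ * ∫ x in a..b, ‖w x‖) := by
        refine (norm_add_le _ _).trans
          (add_le_add ?_ ((norm_sub_le _ _).trans (add_le_add ?_ hrem)))
        · rw [norm_smul]
          gcongr
          exact hE b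
        · rw [norm_smul]
          exact mul_le_mul (hE b) (intervalIntegral.norm_integral_le_integral_norm hab)
            (norm_nonneg _) (by positivity)
    _ = 2 * (‖F a‖ + 2 * ∫ x in a..b, ‖w x‖) / ‖c‖ := by ring

theorem IsPrimitiveOn.exists_norm_integral_exp_smul_le {F w : ℝ → E} {a b : ℝ} (hab : a ≤ b)
    (hF : IsPrimitiveOn F w a b) :
    ∃ C > 0, ∀ c : ℂ, c.re = 0 → c ≠ 0 → ‖∫ x in a..b, exp (c * x) • F x‖ ≤ C / ‖c‖ := by
  refine ⟨1 + 2 * (‖F a‖ + 2 * ∫ x in a..b, ‖w x‖), ?_, fun c hc hc0 => ?_⟩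
  · have := intervalIntegral.integral_nonneg (μ := volume) hab fun x _ => norm_nonneg (w x)
    positivity
  · refine (hF.norm_integral_exp_smul_le hab hc hc0).trans ?_
    gcongr
    linarith

end Oscillatory

namespace Matrix

variable {l m n : Type*} [Fintype l] [Fintype m] [Fintype n]

noncomputable def mulCLM : Matrix l m ℂ →L[ℝ] Matrix m n ℂ →L[ℝ] Matrix l n ℂ :=
  (mulLinearMap ℝ).toContinuousBilinearMap

noncomputable def conjTransposeMulCLM : Matrix l m ℂ →L[ℝ] Matrix l n ℂ →L[ℝ] Matrix m n ℂ :=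
  IsBilinearMap.toContinuousBilinearMap (f := fun A B => Aᴴ * B)
    { add_left := fun A B C => by rw [conjTranspose_add, Matrix.add_mul]
      smul_left := fun c A B => by simp
      add_right := fun A B C => Matrix.mul_add _ _ _
      smul_right := fun c A B => Matrix.mul_smul _ _ _ }

end Matrix

theorem oscillatory_integral_estimate_general (m : ℕ)
    (Q1 Pp Pm : ℝ → Matrix (Fin m) (Fin m) ℂ)
    (hQint : @IntegrableOn _ _ _ _ SeminormedAddGroup.toContinuousENorm Q1 (Icc 0 Real.pi) volume)
    (hPpcont : ContinuousOn Pp (Icc 0 Real.pi)) (hPp0 : Pp 0 = 1)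
    (hPpint : ∀ x ∈ Icc 0 Real.pi, Pp x = 1 + ∫ t in (0:ℝ)..x, Q1 t * Pp t)
    (hPmcont : ContinuousOn Pm (Icc 0 Real.pi)) (hPm0 : Pm 0 = 1)
    (hPmint : ∀ x ∈ Icc 0 Real.pi, Pm x = 1 - ∫ t in (0:ℝ)..x, Q1 t * Pm t) :
    ∃ C > (0:ℝ), ∀ ρ : ℝ, 1 ≤ |ρ| →
      ‖∫ x in (0:ℝ)..Real.pi, Complex.exp (2 * Complex.I * (ρ : ℂ) * (x : ℂ)) •
          ((Pp x)ᴴ * Pm x)‖ ≤ C / |ρ| ∧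
      ‖∫ x in (0:ℝ)..Real.pi, Complex.exp (-(2 * Complex.I * (ρ : ℂ) * (x : ℂ))) •
          ((Pm x)ᴴ * Pp x)‖ ≤ C / |ρ| := by
  have hPp : IsPrimitiveOn Pp (fun t => Q1 t * Pp t) 0 Real.pi :=
    ⟨integrableOn_bilin_of_continuousOn_right Matrix.mulCLM isCompact_Icc hQint hPpcont, by
      rwa [hPp0]⟩
  have hPm : IsPrimitiveOn Pm (fun t => -(Q1 t * Pm t)) 0 Real.pi :=
    ⟨(integrableOn_bilin_of_continuousOn_right Matrix.mulCLM isCompact_Icc hQint hPmcont).neg,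
      fun x hx => by rw [hPm0, intervalIntegral.integral_neg, ← sub_eq_add_neg, hPmint x hx]⟩
  have hF : IsPrimitiveOn (fun x => (Pp x)ᴴ * Pm x) _ 0 Real.pi :=
    hPp.bilin Matrix.conjTransposeMulCLM hPm
  have hG : IsPrimitiveOn (fun x => (Pm x)ᴴ * Pp x) _ 0 Real.pi :=
    hPm.bilin Matrix.conjTransposeMulCLM hPp
  obtain ⟨C₁, hC₁, hF₁⟩ := hF.exists_norm_integral_exp_smul_le Real.pi_pos.le
  obtain ⟨C₂, hC₂, hG₁⟩ := hG.exists_norm_integral_exp_smul_le Real.pi_pos.le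
  refine ⟨C₁ + C₂, by positivity, fun ρ hρ => ?_⟩
  have hρ0 : ρ ≠ 0 := by rintro rfl; norm_num at hρ
  have hre : (2 * Complex.I * ρ).re = 0 := by simp
  have hne : 2 * Complex.I * ρ ≠ 0 := by simp [hρ0]
  have hnorm : ‖2 * Complex.I * ρ‖ = 2 * |ρ| := by simp
  constructor
  · have h := hF₁ _ hre hne
    rw [hnorm] at h
    exact h.trans (by gcongr <;> linarith)
  · have h := hG₁ (-(2 * Complex.I * ρ)) (by simp [hre]) (neg_ne_zero.2 hne)
    simp only [neg_mul, norm_neg, hnorm] at h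
    exact h.trans (by gcongr <;> linarith)

/-- With `Q₁` integrable and anti-Hermitian a.e., and `P₊, P₋` the
absolutely continuous solutions of `P₊' = Q₁P₊`, `P₋' = -Q₁P₋`, `P₊(0) = P₋(0) = I`, there
is a constant `C > 0` such that for every real `ρ` with `|ρ| ≥ 1`,
`‖∫₀^π e^{2iρx} P₊(x)ᴴ P₋(x) dx‖ ≤ C/|ρ|` and `‖∫₀^π e^{-2iρx} P₋(x)ᴴ P₊(x) dx‖ ≤ C/|ρ|`. -/
theorem oscillatory_integral_estimate (m : ℕ) (hm : 1 ≤ m)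
    (Q1 Pp Pm : ℝ → Matrix (Fin m) (Fin m) ℂ)
    (hQint : @IntegrableOn _ _ _ _ SeminormedAddGroup.toContinuousENorm Q1 (Icc 0 Real.pi) volume)
    (hQskew : ∀ᵐ x ∂(volume.restrict (Icc 0 Real.pi)), (Q1 x)ᴴ = -Q1 x)
    (hPpcont : ContinuousOn Pp (Icc 0 Real.pi)) (hPp0 : Pp 0 = 1)
    (hPpint : ∀ x ∈ Icc 0 Real.pi, Pp x = 1 + ∫ t in (0:ℝ)..x, Q1 t * Pp t)
    (hPmcont : ContinuousOn Pm (Icc 0 Real.pi)) (hPm0 : Pm 0 = 1)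
    (hPmint : ∀ x ∈ Icc 0 Real.pi, Pm x = 1 - ∫ t in (0:ℝ)..x, Q1 t * Pm t) :
    ∃ C > (0:ℝ), ∀ ρ : ℝ, 1 ≤ |ρ| →
      ‖∫ x in (0:ℝ)..Real.pi, Complex.exp (2 * Complex.I * (ρ : ℂ) * (x : ℂ)) •
          ((Pp x)ᴴ * Pm x)‖ ≤ C / |ρ| ∧
      ‖∫ x in (0:ℝ)..Real.pi, Complex.exp (-(2 * Complex.I * (ρ : ℂ) * (x : ℂ))) •
          ((Pm x)ᴴ * Pp x)‖ ≤ C / |ρ| :=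
  oscillatory_integral_estimate_general m Q1 Pp Pm hQint hPpcont hPp0 hPpint hPmcont hPm0 hPmint
end

section
/- Let m ≥ 1 and ρ ∈ ℝ. Let Q_1, Q_0 : [0,π] → ℂ^{m×m} be integrable with Q_1(x)† = −Q_1(x), Q_0(x)† = Q_0(x) a.e., and let h_1, h_0, H_1, H_0 ∈ ℂ^{m×m} with h_1† = −h_1, H_1† = −H_1, h_0† = h_0, H_0† = H_0. Let φ(·,ρ) be the matrix solution of Y″ + (ρ²I + 2iρQ_1(x) + Q_0(x))Y = 0 with φ(0,ρ) = I, φ′(0,ρ) = −(iρh_1 + h_0), and let ψ(·,ρ) be the matrix solution of the same equation with ψ(π,ρ) = I, ψ′(π,ρ) = −(iρH_1 + H_0). Then (ψ′(0,ρ) + (iρh_1 + h_0)ψ(0,ρ))† = −(φ′(π,ρ) + (iρH_1 + H_0)φ(π,ρ)), i.e. (U(ψ))† = −V(φ). -/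
open Matrix MeasureTheory Set

attribute [local instance] Matrix.normedAddCommGroup Matrix.normedSpace

/-- The matrix coefficient `ρ²I + 2iρQ₁(x) + Q₀(x)` of the pencil. -/
noncomputable def pencilPot (m : ℕ) (Q1 Q0 : ℝ → Matrix (Fin m) (Fin m) ℂ) (ρ : ℂ) (x : ℝ) :
    Matrix (Fin m) (Fin m) ℂ :=
  ρ ^ 2 • (1 : Matrix (Fin m) (Fin m) ℂ) + (2 * Complex.I * ρ) • Q1 x + Q0 x

/-- `Y` (with derivative `Z`) is an absolutely continuous `ℂᵐ`-valued solution of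
`Y'' + (ρ²I + 2iρQ₁(x) + Q₀(x))Y = 0` on `[0,π]`, encoded by integral equations. -/
def IsVecSol (m : ℕ) (Q1 Q0 : ℝ → Matrix (Fin m) (Fin m) ℂ) (ρ : ℂ)
    (Y Z : ℝ → Fin m → ℂ) : Prop :=
  ContinuousOn Y (Icc 0 Real.pi) ∧ ContinuousOn Z (Icc 0 Real.pi) ∧
  (∀ x ∈ Icc 0 Real.pi, Y x = Y 0 + ∫ t in (0:ℝ)..x, Z t) ∧
  (∀ x ∈ Icc 0 Real.pi, Z x = Z 0 - ∫ t in (0:ℝ)..x, (pencilPot m Q1 Q0 ρ t).mulVec (Y t))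

/-- `ρ` is an eigenvalue of the pencil `L`: there is a not identically zero absolutely
continuous solution of the equation satisfying both boundary conditions. -/
def IsEigenvalue (m : ℕ) (Q1 Q0 : ℝ → Matrix (Fin m) (Fin m) ℂ)
    (h1 h0 H1 H0 : Matrix (Fin m) (Fin m) ℂ) (ρ : ℂ) : Prop :=
  ∃ Y Z : ℝ → Fin m → ℂ,
    IsVecSol m Q1 Q0 ρ Y Z ∧
    Z 0 + ((Complex.I * ρ) • h1 + h0).mulVec (Y 0) = 0 ∧
    Z Real.pi + ((Complex.I * ρ) • H1 + H0).mulVec (Y Real.pi) = 0 ∧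
    ¬ (∀ x ∈ Icc 0 Real.pi, Y x = 0)

/-- `F` (with derivative `G`) is an absolutely continuous matrix solution of
`F'' + (ρ²I + 2iρQ₁(x) + Q₀(x))F = 0` on `[0,π]`, encoded by integral equations. -/
def IsMatSol (m : ℕ) (Q1 Q0 : ℝ → Matrix (Fin m) (Fin m) ℂ) (ρ : ℂ)
    (F G : ℝ → Matrix (Fin m) (Fin m) ℂ) : Prop :=
  ContinuousOn F (Icc 0 Real.pi) ∧ ContinuousOn G (Icc 0 Real.pi) ∧
  (∀ x ∈ Icc 0 Real.pi, F x = F 0 + ∫ t in (0:ℝ)..x, G t) ∧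
  (∀ x ∈ Icc 0 Real.pi, G x = G 0 - ∫ t in (0:ℝ)..x, pencilPot m Q1 Q0 ρ t * F t)

/-! The matrix Wronskian `W(x) = ψ(x)ᴴ φ'(x) - ψ'(x)ᴴ φ(x)` is constant on `[0, π]`: for real `ρ`
the coefficient `ρ²I + 2iρQ₁ + Q₀` is Hermitian, so the two potential terms in `W'` cancel.
Since the solutions are only absolutely continuous, this is done by integrating by parts against a
bilinear map, which in turn is Fubini on the two triangles of the square `[a, b]²`.
Comparing `W(π)` with `W(0)` under the normalisations of `φ` and `ψ`, and using that
`iρh₁ + h₀` and `iρH₁ + H₀` are Hermitian, gives the identity. -/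

section BilinearPrimitive

variable {E F G : Type*} [NormedAddCommGroup E] [NormedSpace ℝ E]
  [NormedAddCommGroup F] [NormedSpace ℝ F] [NormedAddCommGroup G] [NormedSpace ℝ G]
  (B : E →L[ℝ] F →L[ℝ] G) {f : ℝ → E} {g : ℝ → F} {a b : ℝ}

theorem IntervalIntegrable.bilinear_continuousOn (hf : IntervalIntegrable f volume a b)
    (hg : ContinuousOn g (uIcc a b)) : IntervalIntegrable (fun t => B (f t) (g t)) volume a b := by
  rw [intervalIntegrable_iff'] at hf ⊢
  obtain ⟨C, hC⟩ := isCompact_uIcc.exists_bound_of_continuousOn hg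
  exact B.integrable_of_bilin_of_bdd_right C hf (hg.aestronglyMeasurable measurableSet_uIcc)
    (ae_restrict_of_forall_mem measurableSet_uIcc hC)

theorem ContinuousOn.bilinear_intervalIntegrable (hf : ContinuousOn f (uIcc a b))
    (hg : IntervalIntegrable g volume a b) :
    IntervalIntegrable (fun t => B (f t) (g t)) volume a b :=
  hg.bilinear_continuousOn B.flip hf

variable [CompleteSpace E] [CompleteSpace F] [CompleteSpace G]

theorem integral_bilinear_primitive_add (hab : a ≤ b) (hf : IntervalIntegrable f volume a b)
    (hg : IntervalIntegrable g volume a b) :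
    ∫ t in a..b, (B (f t) (∫ s in a..t, g s) + B (∫ s in a..t, f s) (g t)) =
      B (∫ t in a..b, f t) (∫ t in a..b, g t) := by
  rw [intervalIntegrable_iff_integrableOn_Ioc_of_le hab] at hf hg
  set μ := volume.restrict (Ioc a b)
  set K : ℝ × ℝ → G := fun z => B (f z.1) (g z.2)
  have hK : Integrable K (μ.prod μ) := hf.op_fst_snd (by fun_prop) ⟨‖B‖, B.le_opNorm₂⟩ hg
  -- The two terms are the integrals of `K` over the triangles `s ≤ t` and `t < s` of the square.
  set D := {z : ℝ × ℝ | z.2 ≤ z.1}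
  have hD : MeasurableSet D := measurableSet_le measurable_snd measurable_fst
  have h_left : ∀ t ∈ Ioc a b, ∫ s, D.indicator K (t, s) ∂μ = B (f t) (∫ s in a..t, g s) := by
    intro t ht
    calc ∫ s, D.indicator K (t, s) ∂μ = ∫ s, B (f t) ((Iic t).indicator g s) ∂μ := by
          congr 1; funext s; by_cases h : s ≤ t <;> simp [D, K, h]
      _ = B (f t) (∫ s, (Iic t).indicator g s ∂μ) :=
          (B (f t)).integral_comp_comm (hg.indicator measurableSet_Iic)
      _ = B (f t) (∫ s in a..t, g s) := by
          rw [setIntegral_indicator measurableSet_Iic, Ioc_inter_Iic, min_eq_right ht.2,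
            intervalIntegral.integral_of_le ht.1.le]
  have h_right : ∀ t ∈ Ioc a b, ∫ s, Dᶜ.indicator K (s, t) ∂μ = B (∫ s in a..t, f s) (g t) := by
    intro t ht
    have h_inter : Ioc a b ∩ Iio t = Ioo a t := by
      ext s; simp only [mem_inter_iff, mem_Ioc, mem_Iio, mem_Ioo]
      exact ⟨fun h => ⟨h.1.1, h.2⟩, fun h => ⟨⟨h.1, h.2.le.trans ht.2⟩, h.2⟩⟩
    calc ∫ s, Dᶜ.indicator K (s, t) ∂μ = ∫ s, B.flip (g t) ((Iio t).indicator f s) ∂μ := by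
          congr 1; funext s; by_cases h : s < t <;> simp [D, K, h]
      _ = B.flip (g t) (∫ s, (Iio t).indicator f s ∂μ) :=
          (B.flip (g t)).integral_comp_comm (hf.indicator measurableSet_Iio)
      _ = B (∫ s in a..t, f s) (g t) := by
          rw [setIntegral_indicator measurableSet_Iio, h_inter, ← integral_Ioc_eq_integral_Ioo,
            intervalIntegral.integral_of_le ht.1.le, B.flip_apply]
  calc ∫ t in a..b, (B (f t) (∫ s in a..t, g s) + B (∫ s in a..t, f s) (g t))
      = ∫ t, (∫ s, D.indicator K (t, s) ∂μ + ∫ s, Dᶜ.indicator K (s, t) ∂μ) ∂μ := by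
        rw [intervalIntegral.integral_of_le hab]
        exact setIntegral_congr_fun measurableSet_Ioc fun t ht => by rw [h_left t ht, h_right t ht]
    _ = ∫ z, D.indicator K z ∂μ.prod μ + ∫ z, Dᶜ.indicator K z ∂μ.prod μ := by
        rw [integral_add (hK.indicator hD).integral_prod_left
            (hK.indicator hD.compl).integral_prod_right,
          integral_prod _ (hK.indicator hD), integral_prod_symm _ (hK.indicator hD.compl)]
    _ = ∫ z, K z ∂μ.prod μ := by
        rw [← integral_add (hK.indicator hD) (hK.indicator hD.compl)]
        simp_rw [indicator_self_add_compl_apply]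
    _ = B (∫ t in a..b, f t) (∫ t in a..b, g t) := by
        rw [integral_prod_bilin B hf hg, intervalIntegral.integral_of_le hab,
          intervalIntegral.integral_of_le hab]

theorem integral_bilinear_eq_sub_of_eq_add_primitive (hab : a ≤ b)
    (hf : IntervalIntegrable f volume a b) (hg : IntervalIntegrable g volume a b)
    {U : ℝ → E} {V : ℝ → F}
    (hU : ∀ x ∈ Icc a b, U x = U a + ∫ t in a..x, f t)
    (hV : ∀ x ∈ Icc a b, V x = V a + ∫ t in a..x, g t) :
    ∫ t in a..b, (B (f t) (V t) + B (U t) (g t)) = B (U b) (V b) - B (U a) (V a) := by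
  have h_prim_f :=
    intervalIntegral.continuousOn_primitive_interval ((intervalIntegrable_iff').1 hf)
  have h_prim_g :=
    intervalIntegral.continuousOn_primitive_interval ((intervalIntegrable_iff').1 hg)
  have h_const := (hf.bilinear_continuousOn B (continuousOn_const (c := V a))).add
    ((continuousOn_const (c := U a)).bilinear_intervalIntegrable B hg)
  have h_var :=
    (hf.bilinear_continuousOn B h_prim_g).add (h_prim_f.bilinear_intervalIntegrable B hg)
  calc ∫ t in a..b, (B (f t) (V t) + B (U t) (g t))
      = ∫ t in a..b, ((B (f t) (V a) + B (U a) (g t)) +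
          (B (f t) (∫ s in a..t, g s) + B (∫ s in a..t, f s) (g t))) := by
        refine intervalIntegral.integral_congr fun t ht => ?_
        rw [uIcc_of_le hab] at ht
        simp only [hU t ht, hV t ht, map_add, FunLike.coe_add, Pi.add_apply]
        abel
    _ = (B (∫ t in a..b, f t) (V a) + B (U a) (∫ t in a..b, g t)) +
          B (∫ t in a..b, f t) (∫ t in a..b, g t) := by
        have h_flip : ∫ t in a..b, B (f t) (V a) = B (∫ t in a..b, f t) (V a) :=
          (B.flip (V a)).intervalIntegral_comp_comm hf
        rw [intervalIntegral.integral_add h_const h_var, intervalIntegral.integral_add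
            (hf.bilinear_continuousOn B continuousOn_const)
            (continuousOn_const.bilinear_intervalIntegrable B hg),
          h_flip, (B (U a)).intervalIntegral_comp_comm hg,
          integral_bilinear_primitive_add B hab hf hg]
    _ = B (U b) (V b) - B (U a) (V a) := by
        rw [hU b (right_mem_Icc.2 hab), hV b (right_mem_Icc.2 hab)]
        simp only [map_add, FunLike.coe_add, Pi.add_apply]
        abel

end BilinearPrimitive

noncomputable def Matrix.mulCLM_s12 (n : Type*) [Fintype n] [DecidableEq n] :
    Matrix n n ℂ →L[ℝ] Matrix n n ℂ →L[ℝ] Matrix n n ℂ :=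
  LinearMap.toContinuousLinearMap
    (LinearMap.toContinuousLinearMap.toLinearMap ∘ₗ LinearMap.mul ℝ (Matrix n n ℂ))

noncomputable def Matrix.conjTransposeMulCLM_s12 (n : Type*) [Fintype n] [DecidableEq n] :
    Matrix n n ℂ →L[ℝ] Matrix n n ℂ →L[ℝ] Matrix n n ℂ :=
  (Matrix.mulCLM_s12 n).comp
    ((starL' ℝ : Matrix n n ℂ ≃L[ℝ] Matrix n n ℂ) : Matrix n n ℂ →L[ℝ] Matrix n n ℂ)

theorem Matrix.conjTranspose_smul_of_star_eq_neg {n : Type*} {c : ℂ} {A : Matrix n n ℂ}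
    (hc : star c = -c) (hA : Aᴴ = -A) : (c • A)ᴴ = c • A := by
  rw [conjTranspose_smul, hc, hA, neg_smul_neg]

theorem Matrix.conjTranspose_I_mul_ofReal_smul_add {n : Type*} (ρ : ℝ) {A B : Matrix n n ℂ}
    (hA : Aᴴ = -A) (hB : Bᴴ = B) :
    ((Complex.I * ρ) • A + B)ᴴ = (Complex.I * ρ) • A + B := by
  rw [conjTranspose_add, conjTranspose_smul_of_star_eq_neg (by simp) hA, hB]

theorem pencilPot_conjTranspose {m : ℕ} {Q1 Q0 : ℝ → Matrix (Fin m) (Fin m) ℂ} (ρ : ℝ) {x : ℝ}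
    (hQ1 : (Q1 x)ᴴ = -Q1 x) (hQ0 : (Q0 x)ᴴ = Q0 x) :
    (pencilPot m Q1 Q0 ρ x)ᴴ = pencilPot m Q1 Q0 ρ x := by
  have h2 : star (2 * Complex.I * ρ) = -(2 * Complex.I * ρ) := by simp
  simp only [pencilPot, conjTranspose_add, conjTranspose_smul_of_star_eq_neg h2 hQ1, hQ0,
    conjTranspose_smul, conjTranspose_one, star_pow, Complex.star_def, Complex.conj_ofReal]

-- Integrability of matrix-valued maps is written with the norm's `ContinuousENorm` explicitly, as
-- in the statement: instance search picks the product topology on `Matrix`, which does not unify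
-- with the topology of `Matrix.normedAddCommGroup` at instance transparency.
theorem integrableOn_pencilPot {m : ℕ} {Q1 Q0 : ℝ → Matrix (Fin m) (Fin m) ℂ} (ρ : ℂ)
    {s : Set ℝ} (hs : volume s ≠ ⊤)
    (hQ1 : @IntegrableOn ℝ (Matrix (Fin m) (Fin m) ℂ) _ _
      SeminormedAddGroup.toContinuousENorm Q1 s volume)
    (hQ0 : @IntegrableOn ℝ (Matrix (Fin m) (Fin m) ℂ) _ _
      SeminormedAddGroup.toContinuousENorm Q0 s volume) :
    @IntegrableOn ℝ (Matrix (Fin m) (Fin m) ℂ) _ _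
      SeminormedAddGroup.toContinuousENorm (pencilPot m Q1 Q0 ρ) s volume :=
  ((integrableOn_const hs).add (hQ1.smul (2 * Complex.I * ρ))).add hQ0

def matWronskian {n : Type*} [Fintype n] (Ψ Ψ' Φ Φ' : ℝ → Matrix n n ℂ) (x : ℝ) : Matrix n n ℂ :=
  (Ψ x)ᴴ * Φ' x - (Ψ' x)ᴴ * Φ x

theorem matWronskian_pi_eq_matWronskian_zero {m : ℕ} {Q1 Q0 : ℝ → Matrix (Fin m) (Fin m) ℂ}
    {ρ : ℂ} {φ φ' ψ ψ' : ℝ → Matrix (Fin m) (Fin m) ℂ}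
    (hP : @IntegrableOn ℝ (Matrix (Fin m) (Fin m) ℂ) _ _
      SeminormedAddGroup.toContinuousENorm (pencilPot m Q1 Q0 ρ) (Icc 0 Real.pi) volume)
    (hP_herm : ∀ᵐ x ∂(volume.restrict (Icc 0 Real.pi)),
      (pencilPot m Q1 Q0 ρ x)ᴴ = pencilPot m Q1 Q0 ρ x)
    (hφ : IsMatSol m Q1 Q0 ρ φ φ') (hψ : IsMatSol m Q1 Q0 ρ ψ ψ') :
    matWronskian ψ ψ' φ φ' Real.pi = matWronskian ψ ψ' φ φ' 0 := by
  obtain ⟨hφ_cont, hφ'_cont, hφ_eq, hφ'_eq⟩ := hφ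
  obtain ⟨hψ_cont, hψ'_cont, hψ_eq, hψ'_eq⟩ := hψ
  have hπ : (0:ℝ) ≤ Real.pi := Real.pi_pos.le
  set P := pencilPot m Q1 Q0 ρ
  have hP_int := (intervalIntegrable_iff_integrableOn_Icc_of_le hπ).2 hP
  rw [← uIcc_of_le hπ] at hφ_cont hψ_cont
  have hPφ := hP_int.bilinear_continuousOn (mulCLM_s12 (Fin m)) hφ_cont
  have hPψ := hP_int.bilinear_continuousOn (mulCLM_s12 (Fin m)) hψ_cont
  have hφ'_eq' : ∀ x ∈ Icc 0 Real.pi, φ' x = φ' 0 + ∫ t in (0:ℝ)..x, -(P t * φ t) :=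
    fun x hx => by rw [hφ'_eq x hx, intervalIntegral.integral_neg, sub_eq_add_neg]
  have hψ'_eq' : ∀ x ∈ Icc 0 Real.pi, ψ' x = ψ' 0 + ∫ t in (0:ℝ)..x, -(P t * ψ t) :=
    fun x hx => by rw [hψ'_eq x hx, intervalIntegral.integral_neg, sub_eq_add_neg]
  have h1 : ∫ t in (0:ℝ)..Real.pi, ((ψ' t)ᴴ * φ' t + (ψ t)ᴴ * -(P t * φ t)) =
      (ψ Real.pi)ᴴ * φ' Real.pi - (ψ 0)ᴴ * φ' 0 :=
    integral_bilinear_eq_sub_of_eq_add_primitive (conjTransposeMulCLM_s12 (Fin m)) hπ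
      (hψ'_cont.intervalIntegrable_of_Icc hπ) hPφ.neg hψ_eq hφ'_eq'
  have h2 : ∫ t in (0:ℝ)..Real.pi, ((-(P t * ψ t))ᴴ * φ t + (ψ' t)ᴴ * φ' t) =
      (ψ' Real.pi)ᴴ * φ Real.pi - (ψ' 0)ᴴ * φ 0 :=
    integral_bilinear_eq_sub_of_eq_add_primitive (conjTransposeMulCLM_s12 (Fin m)) hπ
      hPψ.neg (hφ'_cont.intervalIntegrable_of_Icc hπ) hψ'_eq' hφ_eq
  rw [matWronskian, matWronskian, sub_eq_sub_iff_sub_eq_sub, ← h1, ← h2]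
  refine intervalIntegral.integral_congr_ae ?_
  filter_upwards [(ae_restrict_iff' measurableSet_Icc).1 hP_herm] with t ht ht_mem
  rw [uIoc_of_le hπ] at ht_mem
  rw [conjTranspose_neg, conjTranspose_mul, ht (Ioc_subset_Icc_self ht_mem)]
  noncomm_ring

theorem U_psi_conjTranspose_eq_neg_V_phi_general (m : ℕ) (ρ : ℝ)
    (Q1 Q0 : ℝ → Matrix (Fin m) (Fin m) ℂ)
    (h1 h0 H1 H0 : Matrix (Fin m) (Fin m) ℂ)
    (hQ1 : @IntegrableOn ℝ (Matrix (Fin m) (Fin m) ℂ) _ _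
      SeminormedAddGroup.toContinuousENorm Q1 (Icc 0 Real.pi) volume)
    (hQ0 : @IntegrableOn ℝ (Matrix (Fin m) (Fin m) ℂ) _ _
      SeminormedAddGroup.toContinuousENorm Q0 (Icc 0 Real.pi) volume)
    (hQ1skew : ∀ᵐ x ∂(volume.restrict (Icc 0 Real.pi)), (Q1 x)ᴴ = -Q1 x)
    (hQ0herm : ∀ᵐ x ∂(volume.restrict (Icc 0 Real.pi)), (Q0 x)ᴴ = Q0 x)
    (hh1 : h1ᴴ = -h1) (hH1 : H1ᴴ = -H1) (hh0 : h0ᴴ = h0) (hH0 : H0ᴴ = H0)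
    (φ φ' ψ ψ' : ℝ → Matrix (Fin m) (Fin m) ℂ)
    (hφ : IsMatSol m Q1 Q0 (ρ : ℂ) φ φ')
    (hφ0 : φ 0 = 1) (hφ'0 : φ' 0 = -((Complex.I * (ρ : ℂ)) • h1 + h0))
    (hψ : IsMatSol m Q1 Q0 (ρ : ℂ) ψ ψ')
    (hψπ : ψ Real.pi = 1)
    (hψ'π : ψ' Real.pi = -((Complex.I * (ρ : ℂ)) • H1 + H0)) :
    (ψ' 0 + ((Complex.I * (ρ : ℂ)) • h1 + h0) * ψ 0)ᴴ =
      -(φ' Real.pi + ((Complex.I * (ρ : ℂ)) • H1 + H0) * φ Real.pi) := by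
  have hW := matWronskian_pi_eq_matWronskian_zero
    (integrableOn_pencilPot (ρ : ℂ) measure_Icc_lt_top.ne hQ1 hQ0)
    (by filter_upwards [hQ1skew, hQ0herm] with x h1x h0x using pencilPot_conjTranspose ρ h1x h0x)
    hφ hψ
  rw [matWronskian, matWronskian, hψπ, hψ'π, hφ0, hφ'0, conjTranspose_neg,
    conjTranspose_I_mul_ofReal_smul_add ρ hH1 hH0] at hW
  rw [conjTranspose_add, conjTranspose_mul, conjTranspose_I_mul_ofReal_smul_add ρ hh1 hh0]
  simp only [conjTranspose_one, one_mul, mul_one, neg_mul, mul_neg, sub_neg_eq_add] at hW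
  rw [hW]
  abel

/-- (Identity (UV).) For real `ρ`, under condition (II), with `φ(·,ρ)` the
solution normalized at `0` and `ψ(·,ρ)` the solution normalized at `π` by `ψ(π,ρ) = I`,
`ψ'(π,ρ) = -(iρH₁ + H₀)`, one has `(U(ψ))ᴴ = -V(φ)`. -/
theorem U_psi_conjTranspose_eq_neg_V_phi (m : ℕ) (hm : 1 ≤ m) (ρ : ℝ)
    (Q1 Q0 : ℝ → Matrix (Fin m) (Fin m) ℂ)
    (h1 h0 H1 H0 : Matrix (Fin m) (Fin m) ℂ)
    (hQ1 : @IntegrableOn ℝ (Matrix (Fin m) (Fin m) ℂ) _ _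
      SeminormedAddGroup.toContinuousENorm Q1 (Icc 0 Real.pi) volume)
    (hQ0 : @IntegrableOn ℝ (Matrix (Fin m) (Fin m) ℂ) _ _
      SeminormedAddGroup.toContinuousENorm Q0 (Icc 0 Real.pi) volume)
    (hQ1skew : ∀ᵐ x ∂(volume.restrict (Icc 0 Real.pi)), (Q1 x)ᴴ = -Q1 x)
    (hQ0herm : ∀ᵐ x ∂(volume.restrict (Icc 0 Real.pi)), (Q0 x)ᴴ = Q0 x)
    (hh1 : h1ᴴ = -h1) (hH1 : H1ᴴ = -H1) (hh0 : h0ᴴ = h0) (hH0 : H0ᴴ = H0)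
    (φ φ' ψ ψ' : ℝ → Matrix (Fin m) (Fin m) ℂ)
    (hφ : IsMatSol m Q1 Q0 (ρ : ℂ) φ φ')
    (hφ0 : φ 0 = 1) (hφ'0 : φ' 0 = -((Complex.I * (ρ : ℂ)) • h1 + h0))
    (hψ : IsMatSol m Q1 Q0 (ρ : ℂ) ψ ψ')
    (hψπ : ψ Real.pi = 1)
    (hψ'π : ψ' Real.pi = -((Complex.I * (ρ : ℂ)) • H1 + H0)) :
    (ψ' 0 + ((Complex.I * (ρ : ℂ)) • h1 + h0) * ψ 0)ᴴ =
      -(φ' Real.pi + ((Complex.I * (ρ : ℂ)) • H1 + H0) * φ Real.pi) :=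
  U_psi_conjTranspose_eq_neg_V_phi_general m ρ Q1 Q0 h1 h0 H1 H0 hQ1 hQ0 hQ1skew hQ0herm hh1 hH1 hh0
    hH0 φ φ' ψ ψ' hφ hφ0 hφ'0 hψ hψπ hψ'π
end

section
/- Consider the quadratic matrix pencil L: Y″ + (ρ²I + 2iρQ_1(x) + Q_0(x))Y = 0 on (0,π) with boundary conditions Y′(0) + (iρh_1 + h_0)Y(0) = 0 and Y′(π) + (iρH_1 + H_0)Y(π) = 0, where Q_1, Q_0 : [0,π] → ℂ^{m×m} are integrable with Q_1(x)† = −Q_1(x), Q_0(x)† = Q_0(x) a.e., and h_1† = −h_1, H_1† = −H_1, h_0† = h_0, H_0† = H_0. Let ρ₀ ∈ ℂ be an eigenvalue with eigenvector Y (a not identically zero absolutely continuous solution satisfying both boundary conditions at ρ = ρ₀). If F[Y] := ∫₀^π Y′(x)†Y′(x) dx − ∫₀^π Y(x)†Q_0(x)Y(x) dx + Y(π)†H_0Y(π) − Y(0)†h_0Y(0) ≥ 0, then ρ₀ is real. -/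
open Matrix MeasureTheory Set

attribute [local instance] Matrix.normedAddCommGroup Matrix.normedSpace

/-- The `ContinuousENorm` induced by the (sup) norm of the local instance above; current Lean no
longer finds it by instance search, since the Pi-norm topology is not reducibly the matrix one. -/
noncomputable def matrixContinuousENorm (m : ℕ) : ContinuousENorm (Matrix (Fin m) (Fin m) ℂ) :=
  SeminormedAddGroup.toContinuousENorm

attribute [local instance] matrixContinuousENorm

open scoped ComplexOrder

/-!
Pair the equation with `Y` and integrate by parts; the boundary conditions express the
boundary terms through `h₀, h₁, H₀, H₁`, and one gets
`ρ₀² a + ρ₀ b = F[Y]` with `a = ∫ Y†Y > 0` and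
`b = i (2 ∫ Y†Q₁Y - Y(π)†H₁Y(π) + Y(0)†h₁Y(0))`, which is real because `Q₁, h₁, H₁` are
skew-Hermitian. A root of a real quadratic `a z² + b z - c` with `a > 0` and `c ≥ 0` is real,
since its discriminant `b² + 4ac` is nonnegative.

As `Z = Y'` is only absolutely continuous, the integration by parts is not done through
pointwise derivatives but through Fubini's theorem on the triangle `s ≤ t`.
-/

section BilinearIntegration

variable {E F G : Type*} [NormedAddCommGroup E] [NormedSpace ℝ E]
  [NormedAddCommGroup F] [NormedSpace ℝ F] [NormedAddCommGroup G] [NormedSpace ℝ G] {a b : ℝ}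

theorem intervalIntegral_integral_swap_triangle {f : ℝ → ℝ → G} (hab : a ≤ b)
    (hf : IntegrableOn (Function.uncurry f) (Ioc a b ×ˢ Ioc a b)) :
    ∫ t in a..b, ∫ s in a..t, f t s = ∫ s in a..b, ∫ t in s..b, f t s := by
  set g : ℝ → ℝ → G := fun t s => (Iic t).indicator (f t) s
  have hg : IntegrableOn (Function.uncurry g) (uIoc a b ×ˢ uIoc a b) := by
    have hg_eq : Function.uncurry g = {p : ℝ × ℝ | p.2 ≤ p.1}.indicator (Function.uncurry f) := by
      ext ⟨t, s⟩
      simp [g, indicator]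
    rw [uIoc_of_le hab, hg_eq]
    exact hf.indicator (measurableSet_le measurable_snd measurable_fst)
  calc ∫ t in a..b, ∫ s in a..t, f t s = ∫ t in a..b, ∫ s in a..b, g t s := by
        simp only [intervalIntegral.integral_of_le hab]
        refine setIntegral_congr_fun measurableSet_Ioc fun t ht => ?_
        rw [intervalIntegral.integral_of_le ht.1.le, integral_indicator measurableSet_Iic,
          Measure.restrict_restrict measurableSet_Iic, inter_comm, Ioc_inter_Iic,
          min_eq_right ht.2]
    _ = ∫ s in a..b, ∫ t in a..b, g t s := intervalIntegral_intervalIntegral_swap hg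
    _ = ∫ s in a..b, ∫ t in s..b, f t s := by
        simp only [intervalIntegral.integral_of_le hab]
        refine setIntegral_congr_fun measurableSet_Ioc fun s hs => ?_
        have hg_eq : (fun t => g t s) = (Ici s).indicator (fun t => f t s) := by
          ext t
          simp [g, indicator]
        have hIcc : Ici s ∩ Ioc a b = Icc s b := by
          ext t
          simp only [mem_inter_iff, mem_Ici, mem_Ioc, mem_Icc]
          constructor
          · rintro ⟨hst, -, htb⟩; exact ⟨hst, htb⟩
          · rintro ⟨hst, htb⟩; exact ⟨hst, hs.1.trans_le hst, htb⟩
        rw [hg_eq, integral_indicator measurableSet_Ici,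
          Measure.restrict_restrict measurableSet_Ici, hIcc, integral_Icc_eq_integral_Ioc, intervalIntegral.integral_of_le hs.2]

namespace ContinuousLinearMap

theorem intervalIntegrable_of_continuousOn_left (B : E →L[ℝ] F →L[ℝ] G) {f : ℝ → E}
    {g : ℝ → F} (hf : ContinuousOn f (uIcc a b)) (hg : IntervalIntegrable g volume a b) :
    IntervalIntegrable (fun t => B (f t) (g t)) volume a b := by
  obtain ⟨C, hC⟩ := isCompact_uIcc.exists_bound_of_continuousOn hf
  rw [intervalIntegrable_iff] at hg ⊢
  exact B.integrable_of_bilin_of_bdd_left C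
    ((hf.mono uIoc_subset_uIcc).aestronglyMeasurable measurableSet_uIoc)
    ((ae_restrict_iff' measurableSet_uIoc).2 (.of_forall fun t ht => hC t (uIoc_subset_uIcc ht)))
    hg

theorem intervalIntegrable_of_continuousOn_right (B : E →L[ℝ] F →L[ℝ] G) {f : ℝ → E}
    {g : ℝ → F} (hf : IntervalIntegrable f volume a b) (hg : ContinuousOn g (uIcc a b)) :
    IntervalIntegrable (fun t => B (f t) (g t)) volume a b :=
  B.flip.intervalIntegrable_of_continuousOn_left hg hf

theorem apply_intervalIntegral_intervalIntegral [CompleteSpace E] [CompleteSpace F]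
    [CompleteSpace G] (B : E →L[ℝ] F →L[ℝ] G) {f : ℝ → E} {g : ℝ → F} (hab : a ≤ b)
    (hf : IntervalIntegrable f volume a b) (hg : IntervalIntegrable g volume a b) :
    B (∫ t in a..b, f t) (∫ t in a..b, g t) =
      (∫ t in a..b, B (f t) (∫ s in a..t, g s)) + ∫ t in a..b, B (∫ s in a..t, f s) (g t) := by
  have hfg : IntegrableOn (Function.uncurry fun t s => B (f t) (g s)) (Ioc a b ×ˢ Ioc a b) := by
    rw [IntegrableOn, Measure.volume_eq_prod, ← Measure.prod_restrict]
    exact ((intervalIntegrable_iff_integrableOn_Ioc_of_le hab).1 hf).op_fst_snd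
      (by fun_prop) ⟨‖B‖, B.le_opNorm₂⟩ ((intervalIntegrable_iff_integrableOn_Ioc_of_le hab).1 hg)
  have hswap : ∫ t in a..b, B (f t) (∫ s in a..t, g s) =
      ∫ s in a..b, B (∫ t in a..b, f t) (g s) - B (∫ t in a..s, f t) (g s) :=
    calc ∫ t in a..b, B (f t) (∫ s in a..t, g s) = ∫ t in a..b, ∫ s in a..t, B (f t) (g s) :=
          intervalIntegral.integral_congr fun t ht =>
            ((B (f t)).intervalIntegral_comp_comm
              (hg.mono_set (uIcc_subset_uIcc left_mem_uIcc ht))).symm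
      _ = ∫ s in a..b, ∫ t in s..b, B (f t) (g s) :=
          intervalIntegral_integral_swap_triangle hab hfg
      _ = ∫ s in a..b, B (∫ t in a..b, f t) (g s) - B (∫ t in a..s, f t) (g s) :=
          intervalIntegral.integral_congr fun s hs => by
            have h := (B.flip (g s)).intervalIntegral_comp_comm
              (hf.mono_set (uIcc_subset_uIcc hs right_mem_uIcc))
            simp only [flip_apply] at h
            rw [h, ← _root_.sub_apply, ← map_sub,
              intervalIntegral.integral_interval_sub_left hf
                (hf.mono_set (uIcc_subset_uIcc left_mem_uIcc hs))]
  have hFc : ContinuousOn (fun s => ∫ t in a..s, f t) (uIcc a b) :=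
    intervalIntegral.continuousOn_primitive_interval' hf left_mem_uIcc
  rw [hswap, intervalIntegral.integral_sub
    (B.intervalIntegrable_of_continuousOn_left continuousOn_const hg)
    (B.intervalIntegrable_of_continuousOn_left hFc hg),
    (B (∫ t in a..b, f t)).intervalIntegral_comp_comm hg, sub_add_cancel]

theorem integral_bilinear_eq_sub_of_eq_add_integral [CompleteSpace E] [CompleteSpace F]
    [CompleteSpace G] (B : E →L[ℝ] F →L[ℝ] G) {u u' : ℝ → E} {v v' : ℝ → F} (hab : a ≤ b)
    (hu' : IntervalIntegrable u' volume a b) (hv' : IntervalIntegrable v' volume a b)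
    (hu : ∀ x ∈ Icc a b, u x = u a + ∫ t in a..x, u' t)
    (hv : ∀ x ∈ Icc a b, v x = v a + ∫ t in a..x, v' t) :
    (∫ t in a..b, B (u' t) (v t)) + ∫ t in a..b, B (u t) (v' t) =
      B (u b) (v b) - B (u a) (v a) := by
  have hUc : ContinuousOn (fun t => ∫ s in a..t, u' s) (uIcc a b) :=
    intervalIntegral.continuousOn_primitive_interval' hu' left_mem_uIcc
  have hVc : ContinuousOn (fun t => ∫ s in a..t, v' s) (uIcc a b) :=
    intervalIntegral.continuousOn_primitive_interval' hv' left_mem_uIcc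
  have hv_eq : EqOn (fun t => B (u' t) (v t))
      (fun t => B (u' t) (v a) + B (u' t) (∫ s in a..t, v' s)) (uIcc a b) := fun t ht => by
    simp only [hv t (uIcc_of_le hab ▸ ht), map_add]
  have hu_eq : EqOn (fun t => B (u t) (v' t))
      (fun t => B (u a) (v' t) + B (∫ s in a..t, u' s) (v' t)) (uIcc a b) := fun t ht => by
    simp only [hu t (uIcc_of_le hab ▸ ht), map_add, _root_.add_apply]
  have hu'_const : ∫ t in a..b, B (u' t) (v a) = B (∫ t in a..b, u' t) (v a) := by
    simpa only [flip_apply] using (B.flip (v a)).intervalIntegral_comp_comm hu'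
  rw [intervalIntegral.integral_congr hv_eq, intervalIntegral.integral_congr hu_eq,
    intervalIntegral.integral_add
      (B.intervalIntegrable_of_continuousOn_right hu' continuousOn_const)
      (B.intervalIntegrable_of_continuousOn_right hu' hVc),
    intervalIntegral.integral_add
      (B.intervalIntegrable_of_continuousOn_left continuousOn_const hv')
      (B.intervalIntegrable_of_continuousOn_left hUc hv'),
    hu'_const, (B (u a)).intervalIntegral_comp_comm hv', hu b ⟨hab, le_rfl⟩, hv b ⟨hab, le_rfl⟩]
  simp only [map_add, _root_.add_apply, B.apply_intervalIntegral_intervalIntegral hab hu' hv']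
  abel

end ContinuousLinearMap

end BilinearIntegration

theorem Complex.im_eq_zero_of_sq_mul_add_mul_eq {a b c z : ℂ} (ha : 0 < a) (hb : b.im = 0)
    (hc : 0 ≤ c) (h : z ^ 2 * a + z * b = c) : z.im = 0 := by
  obtain ⟨ha_re, ha_im⟩ := Complex.lt_def.1 ha
  obtain ⟨hc_re, hc_im⟩ := Complex.le_def.1 hc
  have him := congrArg Complex.im h
  have hre := congrArg Complex.re h
  simp only [pow_two, Complex.add_re, Complex.add_im, Complex.mul_re, Complex.mul_im, hb,
    Complex.zero_re, Complex.zero_im, ← ha_im, ← hc_im] at him hre ha_re hc_re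
  by_contra hz
  have hb_re : b.re = -(2 * z.re * a.re) :=
    mul_left_cancel₀ hz (by linear_combination him)
  rw [hb_re] at hre
  nlinarith [mul_pos (mul_self_pos.2 hz) ha_re, mul_nonneg (mul_self_nonneg z.re) ha_re.le]

section Pencil

variable {n : Type*} [Fintype n]

theorem Matrix.star_star_dotProduct_mulVec (M : Matrix n n ℂ) (v : n → ℂ) :
    star (star v ⬝ᵥ M *ᵥ v) = star v ⬝ᵥ Mᴴ *ᵥ v := by
  rw [star_dotProduct, star_star, star_mulVec, ← dotProduct_mulVec]

theorem Matrix.re_star_dotProduct_mulVec_eq_zero {M : Matrix n n ℂ} (hM : Mᴴ = -M)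
    (v : n → ℂ) : (star v ⬝ᵥ M *ᵥ v).re = 0 := by
  have h := congrArg Complex.re (M.star_star_dotProduct_mulVec v)
  rw [hM, neg_mulVec, dotProduct_neg, Complex.star_def, Complex.conj_re, Complex.neg_re] at h
  linarith

theorem star_dotProduct_add_mul_add_eq_zero {y z : n → ℂ} {c : ℂ} {A B : Matrix n n ℂ}
    (h : z + (c • A + B) *ᵥ y = 0) :
    star y ⬝ᵥ z + c * (star y ⬝ᵥ A *ᵥ y) + star y ⬝ᵥ B *ᵥ y = 0 := by
  have := congrArg (star y ⬝ᵥ ·) h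
  simpa only [dotProduct_add, add_mulVec, smul_mulVec, dotProduct_smul, smul_eq_mul,
    dotProduct_zero, add_assoc] using this

variable {a b : ℝ}

noncomputable def starDotProductCLM : (n → ℂ) →L[ℝ] (n → ℂ) →L[ℝ] ℂ :=
  IsBilinearMap.toContinuousBilinearMap (f := fun v w => star v ⬝ᵥ w)
    { add_left := fun x y z => by rw [star_add, add_dotProduct]
      smul_left := fun c x y => by rw [star_smul, star_trivial, smul_dotProduct]
      add_right := fun x y z => dotProduct_add _ _ _
      smul_right := fun c x y => dotProduct_smul _ _ _ }

@[simp]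
theorem starDotProductCLM_apply (v w : n → ℂ) : starDotProductCLM v w = star v ⬝ᵥ w := rfl

-- Only for `Fin m`: integrability of matrix-valued functions is measured through
-- `matrixContinuousENorm`, which is defined only for square matrices indexed by `Fin m`.
noncomputable def mulVecCLM {m : ℕ} :
    Matrix (Fin m) (Fin m) ℂ →L[ℝ] (Fin m → ℂ) →L[ℝ] (Fin m → ℂ) :=
  IsBilinearMap.toContinuousBilinearMap
    { add_left := fun M N v => add_mulVec M N v
      smul_left := fun c M v => smul_mulVec c M v
      add_right := fun M v w => mulVec_add M v w
      smul_right := fun c M v => mulVec_smul M c v }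

theorem intervalIntegral_star_dotProduct_self_pos {Y : ℝ → n → ℂ} (hab : a < b)
    (hY : ContinuousOn Y (Icc a b)) (hne : ∃ x ∈ Icc a b, Y x ≠ 0) :
    0 < ∫ x in a..b, star (Y x) ⬝ᵥ Y x := by
  have hreal (x : ℝ) : star (Y x) ⬝ᵥ Y x = ((star (Y x) ⬝ᵥ Y x).re : ℂ) :=
    Complex.eq_re_of_ofReal_le (r := 0)
      (by rw [Complex.ofReal_zero]; exact dotProduct_star_self_nonneg (Y x))
  rw [intervalIntegral.integral_congr fun x _ => hreal x, intervalIntegral.integral_ofReal,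
    Complex.zero_lt_real]
  obtain ⟨c, hc, hYc⟩ := hne
  refine intervalIntegral.integral_pos hab ?_ (fun x _ => ?_) ⟨c, hc, ?_⟩
  · exact Complex.continuous_re.comp_continuousOn
      ((starDotProductCLM (n := n)).continuous₂.comp_continuousOn (hY.prodMk hY))
  · exact (Complex.nonneg_iff.1 (dotProduct_star_self_nonneg (Y x))).1
  · exact (Complex.lt_def.1 (dotProduct_star_self_pos_iff.2 hYc)).1

theorem re_intervalIntegral_star_dotProduct_mulVec_eq_zero {Q : ℝ → Matrix n n ℂ}
    {Y : ℝ → n → ℂ} (hab : a ≤ b) (hQ : ∀ᵐ x ∂volume.restrict (Icc a b), (Q x)ᴴ = -Q x) :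
    (∫ x in a..b, star (Y x) ⬝ᵥ Q x *ᵥ Y x).re = 0 := by
  have hconj : star (∫ x in a..b, star (Y x) ⬝ᵥ Q x *ᵥ Y x) =
      -∫ x in a..b, star (Y x) ⬝ᵥ Q x *ᵥ Y x := by
    rw [Complex.star_def, ← intervalIntegral.intervalIntegral_conj, ← intervalIntegral.integral_neg]
    refine intervalIntegral.integral_congr_ae ?_
    filter_upwards [(ae_restrict_iff' measurableSet_Icc).1 hQ] with x hx hxab
    rw [← Complex.star_def, Matrix.star_star_dotProduct_mulVec,
      hx (Ioc_subset_Icc_self (uIoc_of_le hab ▸ hxab)), neg_mulVec, dotProduct_neg]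
  have hre := congrArg Complex.re hconj
  rw [Complex.star_def, Complex.conj_re, Complex.neg_re] at hre
  linarith

theorem intervalIntegrable_star_dotProduct_mulVec {m : ℕ} {Q : ℝ → Matrix (Fin m) (Fin m) ℂ}
    {Y : ℝ → Fin m → ℂ} (hab : a ≤ b) (hQ : IntegrableOn Q (Icc a b))
    (hY : ContinuousOn Y (Icc a b)) :
    IntervalIntegrable (fun t => star (Y t) ⬝ᵥ Q t *ᵥ Y t) volume a b := by
  rw [← uIcc_of_le hab] at hQ hY
  exact starDotProductCLM.intervalIntegrable_of_continuousOn_left hY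
    (mulVecCLM.intervalIntegrable_of_continuousOn_right hQ.intervalIntegrable hY)

variable {m : ℕ} {Q1 Q0 : ℝ → Matrix (Fin m) (Fin m) ℂ} {ρ : ℂ}

theorem pencilPot_mulVec (x : ℝ) (v : Fin m → ℂ) :
    pencilPot m Q1 Q0 ρ x *ᵥ v = ρ ^ 2 • v + (2 * Complex.I * ρ) • Q1 x *ᵥ v + Q0 x *ᵥ v := by
  simp only [pencilPot, add_mulVec, smul_mulVec, one_mulVec]

theorem intervalIntegrable_pencilPot_mulVec {Y : ℝ → Fin m → ℂ} (hab : a ≤ b)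
    (hQ1 : IntegrableOn Q1 (Icc a b)) (hQ0 : IntegrableOn Q0 (Icc a b))
    (hY : ContinuousOn Y (Icc a b)) :
    IntervalIntegrable (fun t => pencilPot m Q1 Q0 ρ t *ᵥ Y t) volume a b := by
  rw [← uIcc_of_le hab] at hQ1 hQ0 hY
  have hQ1Y : IntervalIntegrable (fun t => Q1 t *ᵥ Y t) volume a b :=
    mulVecCLM.intervalIntegrable_of_continuousOn_right hQ1.intervalIntegrable hY
  have hQ0Y : IntervalIntegrable (fun t => Q0 t *ᵥ Y t) volume a b :=
    mulVecCLM.intervalIntegrable_of_continuousOn_right hQ0.intervalIntegrable hY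
  have hYi : IntervalIntegrable Y volume a b := hY.intervalIntegrable
  simp only [pencilPot_mulVec]
  exact ((hYi.smul (ρ ^ 2)).add (hQ1Y.smul (2 * Complex.I * ρ))).add hQ0Y

theorem integral_star_dotProduct_pencilPot_mulVec {Y : ℝ → Fin m → ℂ} (hab : a ≤ b)
    (hQ1 : IntegrableOn Q1 (Icc a b)) (hQ0 : IntegrableOn Q0 (Icc a b))
    (hY : ContinuousOn Y (Icc a b)) :
    ∫ x in a..b, star (Y x) ⬝ᵥ pencilPot m Q1 Q0 ρ x *ᵥ Y x =
      ρ ^ 2 * (∫ x in a..b, star (Y x) ⬝ᵥ Y x) +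
        2 * Complex.I * ρ * (∫ x in a..b, star (Y x) ⬝ᵥ Q1 x *ᵥ Y x) +
        ∫ x in a..b, star (Y x) ⬝ᵥ Q0 x *ᵥ Y x := by
  have hYY : IntervalIntegrable (fun x => star (Y x) ⬝ᵥ Y x) volume a b := by
    rw [← uIcc_of_le hab] at hY
    exact starDotProductCLM.intervalIntegrable_of_continuousOn_left hY hY.intervalIntegrable
  simp only [pencilPot_mulVec, dotProduct_add, dotProduct_smul, smul_eq_mul]
  rw [intervalIntegral.integral_add ((hYY.const_mul _).add
      ((intervalIntegrable_star_dotProduct_mulVec hab hQ1 hY).const_mul _))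
      (intervalIntegrable_star_dotProduct_mulVec hab hQ0 hY),
    intervalIntegral.integral_add (hYY.const_mul _)
      ((intervalIntegrable_star_dotProduct_mulVec hab hQ1 hY).const_mul _),
    intervalIntegral.integral_const_mul, intervalIntegral.integral_const_mul]

theorem IsVecSol.energy_identity {Y Z : ℝ → Fin m → ℂ} (hQ1 : IntegrableOn Q1 (Icc 0 Real.pi))
    (hQ0 : IntegrableOn Q0 (Icc 0 Real.pi)) (hsol : IsVecSol m Q1 Q0 ρ Y Z) :
    star (Y Real.pi) ⬝ᵥ Z Real.pi - star (Y 0) ⬝ᵥ Z 0 =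
      (∫ x in (0:ℝ)..Real.pi, star (Z x) ⬝ᵥ Z x) -
        ∫ x in (0:ℝ)..Real.pi, star (Y x) ⬝ᵥ pencilPot m Q1 Q0 ρ x *ᵥ Y x := by
  obtain ⟨hYc, hZc, hY, hZ⟩ := hsol
  have hπ : (0:ℝ) ≤ Real.pi := Real.pi_pos.le
  have hZ' (x : ℝ) (hx : x ∈ Icc 0 Real.pi) :
      Z x = Z 0 + ∫ t in (0:ℝ)..x, -(pencilPot m Q1 Q0 ρ t *ᵥ Y t) := by
    rw [hZ x hx, intervalIntegral.integral_neg, sub_eq_add_neg]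
  have hw : IntervalIntegrable (fun t => -(pencilPot m Q1 Q0 ρ t *ᵥ Y t)) volume 0 Real.pi :=
    (intervalIntegrable_pencilPot_mulVec hπ hQ1 hQ0 hYc).neg
  have h := starDotProductCLM.integral_bilinear_eq_sub_of_eq_add_integral hπ
    (hZc.intervalIntegrable_of_Icc hπ) hw hY hZ'
  simp only [starDotProductCLM_apply, dotProduct_neg, intervalIntegral.integral_neg] at h
  rw [← h, sub_eq_add_neg]

end Pencil

theorem eigenvalue_real_of_form_nonneg_general (m : ℕ) (ρ₀ : ℂ)
    (Q1 Q0 : ℝ → Matrix (Fin m) (Fin m) ℂ)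
    (h1 h0 H1 H0 : Matrix (Fin m) (Fin m) ℂ)
    (hQ1 : IntegrableOn Q1 (Icc 0 Real.pi))
    (hQ0 : IntegrableOn Q0 (Icc 0 Real.pi))
    (hQ1skew : ∀ᵐ x ∂(volume.restrict (Icc 0 Real.pi)), (Q1 x)ᴴ = -Q1 x)
    (hh1 : h1ᴴ = -h1) (hH1 : H1ᴴ = -H1)
    (Y Z : ℝ → Fin m → ℂ)
    (hsol : IsVecSol m Q1 Q0 ρ₀ Y Z)
    (hbc0 : Z 0 + ((Complex.I * ρ₀) • h1 + h0).mulVec (Y 0) = 0)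
    (hbcπ : Z Real.pi + ((Complex.I * ρ₀) • H1 + H0).mulVec (Y Real.pi) = 0)
    (hY0 : ¬ (∀ x ∈ Icc 0 Real.pi, Y x = 0))
    (hF : 0 ≤ (∫ x in (0:ℝ)..Real.pi, star (Z x) ⬝ᵥ Z x) -
        (∫ x in (0:ℝ)..Real.pi, star (Y x) ⬝ᵥ (Q0 x).mulVec (Y x)) +
        star (Y Real.pi) ⬝ᵥ H0.mulVec (Y Real.pi) -
        star (Y 0) ⬝ᵥ h0.mulVec (Y 0)) :
    ρ₀.im = 0 := by
  have hπ : (0:ℝ) ≤ Real.pi := Real.pi_pos.le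
  have henergy := hsol.energy_identity hQ1 hQ0
  rw [integral_star_dotProduct_pencilPot_mulVec hπ hQ1 hQ0 hsol.1] at henergy
  push Not at hY0
  refine Complex.im_eq_zero_of_sq_mul_add_mul_eq
    (intervalIntegral_star_dotProduct_self_pos Real.pi_pos hsol.1 hY0)
    (b := Complex.I * (2 * (∫ x in (0:ℝ)..Real.pi, star (Y x) ⬝ᵥ Q1 x *ᵥ Y x) -
      star (Y Real.pi) ⬝ᵥ H1 *ᵥ Y Real.pi + star (Y 0) ⬝ᵥ h1 *ᵥ Y 0)) ?_ hF ?_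
  · simp [Complex.mul_im, re_intervalIntegral_star_dotProduct_mulVec_eq_zero hπ hQ1skew,
      Matrix.re_star_dotProduct_mulVec_eq_zero hh1, Matrix.re_star_dotProduct_mulVec_eq_zero hH1]
  · linear_combination henergy - star_dotProduct_add_mul_add_eq_zero hbcπ +
      star_dotProduct_add_mul_add_eq_zero hbc0

/-- (Remark 1.) Under condition (II), if `ρ₀` is an eigenvalue of the
pencil with eigenvector `Y` (with derivative `Z`), and the quadratic form
`F[Y] = ∫₀^π Y'ᴴY' - ∫₀^π YᴴQ₀Y + Y(π)ᴴH₀Y(π) - Y(0)ᴴh₀Y(0)` is nonnegative, then `ρ₀`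
is real. -/
theorem eigenvalue_real_of_form_nonneg (m : ℕ) (hm : 1 ≤ m) (ρ₀ : ℂ)
    (Q1 Q0 : ℝ → Matrix (Fin m) (Fin m) ℂ)
    (h1 h0 H1 H0 : Matrix (Fin m) (Fin m) ℂ)
    (hQ1 : IntegrableOn Q1 (Icc 0 Real.pi))
    (hQ0 : IntegrableOn Q0 (Icc 0 Real.pi))
    (hQ1skew : ∀ᵐ x ∂(volume.restrict (Icc 0 Real.pi)), (Q1 x)ᴴ = -Q1 x)
    (hQ0herm : ∀ᵐ x ∂(volume.restrict (Icc 0 Real.pi)), (Q0 x)ᴴ = Q0 x)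
    (hh1 : h1ᴴ = -h1) (hH1 : H1ᴴ = -H1) (hh0 : h0ᴴ = h0) (hH0 : H0ᴴ = H0)
    (Y Z : ℝ → Fin m → ℂ)
    (hsol : IsVecSol m Q1 Q0 ρ₀ Y Z)
    (hbc0 : Z 0 + ((Complex.I * ρ₀) • h1 + h0).mulVec (Y 0) = 0)
    (hbcπ : Z Real.pi + ((Complex.I * ρ₀) • H1 + H0).mulVec (Y Real.pi) = 0)
    (hY0 : ¬ (∀ x ∈ Icc 0 Real.pi, Y x = 0))
    (hF : 0 ≤ (∫ x in (0:ℝ)..Real.pi, star (Z x) ⬝ᵥ Z x) -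
        (∫ x in (0:ℝ)..Real.pi, star (Y x) ⬝ᵥ (Q0 x).mulVec (Y x)) +
        star (Y Real.pi) ⬝ᵥ H0.mulVec (Y Real.pi) -
        star (Y 0) ⬝ᵥ h0.mulVec (Y 0)) :
    ρ₀.im = 0 :=
  eigenvalue_real_of_form_nonneg_general m ρ₀ Q1 Q0 h1 h0 H1 H0 hQ1 hQ0 hQ1skew hh1 hH1 Y Z hsol
    hbc0 hbcπ hY0 hF
end

section
/- Let m ≥ 1, C₀ > 0, 0 ≤ δ ≤ π, and let Q_1, Q̃_1 : [0,π] → ℂ^{m×m} be integrable with Q_1(x)† = −Q_1(x), Q̃_1(x)† = −Q̃_1(x), ‖Q_1(x)‖ ≤ C₀ and ‖Q̃_1(x)‖ ≤ C₀ (operator norm) for a.e. x ∈ [0,π], and Q_1(x) = Q̃_1(x) for a.e. x ∈ [0,δ]. Let P_± and P̃_± be the absolutely continuous solutions of P_±′ = ±Q_1P_±, P̃_±′ = ±Q̃_1P̃_±, with P_±(0) = P̃_±(0) = I, and set Ω(x) := (1/2)(P_−(x)P̃_−(x)† + P_+(x)P̃_+(x)†). Then Ω(x) = I for x ∈ [0,δ],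 and ‖Ω(x) − I‖ ≤ 2C₀(x − δ) for all x ∈ [δ,π] (operator norm). -/
open Matrix MeasureTheory Set
open scoped Matrix.Norms.L2Operator Interval

/-!
The product rule for the integral equations (proved with Fubini on a triangle) gives, whenever
`Q̃` is skew-adjoint, `P̃(x)⋆ P(x) = 1 + ∫₀ˣ P̃⋆ (Q - Q̃) P`. For `P̃ = P` the integrand vanishes,
so every solution is unitary. The integrand then has norm `‖Q - Q̃‖ ≤ 2C₀` and vanishes a.e. on
`[0, δ]`, and conjugation by the unitary `P̃(x)` turns the formula into
`‖P(x) P̃(x)⋆ - 1‖ ≤ 2C₀ (x - δ)`. Averaging the estimates for `P₋` and `P₊` bounds `Ω - 1`, and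
the case `δ = x` gives `Ω = 1` on `[0, δ]`.
-/

theorem norm_mul_star_sub_one_of_mem_unitary {R : Type*} [NormedRing R] [StarRing R]
    [CStarRing R] {U : R} (hU : U ∈ unitary R) (A : R) :
    ‖A * star U - 1‖ = ‖star U * A - 1‖ := by
  have hconj : A * star U - 1 = U * (star U * A - 1) * star U := by
    rw [mul_sub, sub_mul, mul_one, ← mul_assoc, Unitary.mul_star_self_of_mem hU, one_mul]
  rw [hconj, CStarRing.norm_mul_mem_unitary _ (Unitary.star_mem hU),
    CStarRing.norm_mem_unitary_mul _ hU]

section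

variable {E : Type*} [NormedRing E] [NormedAlgebra ℝ E]

theorem integral_Ioc_mul_integral_Ioc {a b : ℝ} {u v : ℝ → E}
    (hu : IntegrableOn u (Ioc a b)) (hv : IntegrableOn v (Ioc a b)) :
    (∫ s in Ioc a b, u s) * (∫ t in Ioc a b, v t) =
      (∫ s in Ioc a b, u s * ∫ t in Ioc a s, v t) +
        ∫ t in Ioc a b, (∫ s in Ioc a t, u s) * v t := by
  set μ := volume.restrict (Ioc a b)
  have hK : Integrable (fun p : ℝ × ℝ => u p.1 * v p.2) (μ.prod μ) := hu.mul_prod hv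
  set T : Set (ℝ × ℝ) := {p | p.2 ≤ p.1}
  have hT : MeasurableSet T := measurableSet_le measurable_snd measurable_fst
  have lower : ∫ p in T, u p.1 * v p.2 ∂(μ.prod μ) =
      ∫ s in Ioc a b, u s * ∫ t in Ioc a s, v t := by
    rw [← integral_indicator hT, integral_prod _ (hK.indicator hT)]
    refine setIntegral_congr_fun measurableSet_Ioc fun s hs => ?_
    have hsec : T.indicator (fun p : ℝ × ℝ => u p.1 * v p.2) ∘ Prod.mk s =
        (Iic s).indicator fun t => u s * v t := by
      ext t; by_cases h : t ≤ s <;> simp [T, h]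
    rw [Function.comp_def] at hsec
    rw [hsec, integral_indicator measurableSet_Iic, Measure.restrict_restrict measurableSet_Iic,
      inter_comm, Ioc_inter_Iic, min_eq_right hs.2,
      integral_const_mul_of_integrable (hv.mono_set (Ioc_subset_Ioc_right hs.2))]
  have upper : ∫ p in Tᶜ, u p.1 * v p.2 ∂(μ.prod μ) =
      ∫ t in Ioc a b, (∫ s in Ioc a t, u s) * v t := by
    rw [← integral_indicator hT.compl, integral_prod_symm _ (hK.indicator hT.compl)]
    refine setIntegral_congr_fun measurableSet_Ioc fun t ht => ?_
    have hsec : (fun s => Tᶜ.indicator (fun p : ℝ × ℝ => u p.1 * v p.2) (s, t)) =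
        (Iio t).indicator fun s => u s * v t := by
      ext s; by_cases h : s < t <;> simp [T, h, not_le.mpr, not_lt.mp]
    have hIoo : Iio t ∩ Ioc a b = Ioo a t := by
      ext s
      simp only [mem_inter_iff, mem_Iio, mem_Ioc, mem_Ioo]
      exact ⟨fun h => ⟨h.2.1, h.1⟩, fun h => ⟨h.2, h.1, h.2.le.trans ht.2⟩⟩
    rw [hsec, integral_indicator measurableSet_Iio, Measure.restrict_restrict measurableSet_Iio,
      hIoo, ← integral_Ioc_eq_integral_Ioo,
      integral_mul_const_of_integrable (hu.mono_set (Ioc_subset_Ioc_right ht.2))]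
  rw [← lower, ← upper, integral_add_compl hT hK, integral_prod _ hK]
  simp only [fun s => integral_const_mul_of_integrable (μ := μ) (c := u s) hv]
  exact (integral_mul_const_of_integrable hu).symm

theorem mul_eq_mul_add_intervalIntegral {a c : ℝ} {u v f g : ℝ → E} {f₀ g₀ : E}
    (hu : IntegrableOn u (Icc a c)) (hv : IntegrableOn v (Icc a c))
    (hf : ∀ x ∈ Icc a c, f x = f₀ + ∫ t in a..x, u t)
    (hg : ∀ x ∈ Icc a c, g x = g₀ + ∫ t in a..x, v t) {x : ℝ} (hx : x ∈ Icc a c) :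
    f x * g x = f₀ * g₀ + ∫ t in a..x, (u t * g t + f t * v t) := by
  have hsub : Icc a x ⊆ Icc a c := Icc_subset_Icc_right hx.2
  have hux : IntegrableOn u (Icc a x) := hu.mono_set hsub
  have hvx : IntegrableOn v (Icc a x) := hv.mono_set hsub
  have huV : IntegrableOn (fun t => u t * ∫ s in Ioc a t, v s) (Ioc a x) :=
    (hux.mul_continuousOn (intervalIntegral.continuousOn_primitive hvx) isCompact_Icc).mono_set
      Ioc_subset_Icc_self
  have hUv : IntegrableOn (fun t => (∫ s in Ioc a t, u s) * v t) (Ioc a x) :=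
    (hvx.continuousOn_mul (intervalIntegral.continuousOn_primitive hux) isCompact_Icc).mono_set
      Ioc_subset_Icc_self
  replace hux : IntegrableOn u (Ioc a x) := hux.mono_set Ioc_subset_Icc_self
  replace hvx : IntegrableOn v (Ioc a x) := hvx.mono_set Ioc_subset_Icc_self
  have hexpand : ∀ t ∈ Ioc a x, u t * g t + f t * v t =
      (u t * g₀ + f₀ * v t) + (u t * (∫ s in Ioc a t, v s) + (∫ s in Ioc a t, u s) * v t) := by
    intro t ht
    have ht' : t ∈ Icc a c := hsub (Ioc_subset_Icc_self ht)
    rw [hf t ht', hg t ht', intervalIntegral.integral_of_le ht.1.le,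
      intervalIntegral.integral_of_le ht.1.le]
    noncomm_ring
  have hu₀ : IntegrableOn (fun t => u t * g₀) (Ioc a x) := hux.mul_const g₀
  have hv₀ : IntegrableOn (fun t => f₀ * v t) (Ioc a x) := hvx.const_mul f₀
  have h₀ : IntegrableOn (fun t => u t * g₀ + f₀ * v t) (Ioc a x) := hu₀.add hv₀
  have h₁ : IntegrableOn (fun t => u t * (∫ s in Ioc a t, v s) + (∫ s in Ioc a t, u s) * v t)
      (Ioc a x) := huV.add hUv
  rw [hf x hx, hg x hx]
  simp only [intervalIntegral.integral_of_le hx.1]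
  rw [setIntegral_congr_fun measurableSet_Ioc hexpand, integral_add h₀ h₁, integral_add hu₀ hv₀,
    integral_add huV hUv, integral_mul_const_of_integrable hux,
    integral_const_mul_of_integrable hvx, ← integral_Ioc_mul_integral_Ioc hux hvx]
  noncomm_ring

def IsFundamentalSolution (Q P : ℝ → E) (a c : ℝ) : Prop :=
  ContinuousOn P (Icc a c) ∧ ∀ x ∈ Icc a c, P x = 1 + ∫ t in a..x, Q t * P t

namespace IsFundamentalSolution

variable {Q Q' P P' : ℝ → E} {a c : ℝ}

theorem integrableOn_mul (hP : IsFundamentalSolution Q P a c) (hQ : IntegrableOn Q (Icc a c)) :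
    IntegrableOn (fun t => Q t * P t) (Icc a c) :=
  hQ.mul_continuousOn hP.1 isCompact_Icc

theorem of_eq_one_sub (hc : ContinuousOn P (Icc a c))
    (h : ∀ x ∈ Icc a c, P x = 1 - ∫ t in a..x, Q t * P t) :
    IsFundamentalSolution (-Q) P a c := by
  refine ⟨hc, fun x hx => ?_⟩
  simp only [Pi.neg_apply, neg_mul, intervalIntegral.integral_neg, h x hx, sub_eq_add_neg]

variable [CompleteSpace E] [StarRing E] [StarModule ℝ E] [ContinuousStar E]

theorem star_eq (hP : IsFundamentalSolution Q P a c) (hQ : IntegrableOn Q (Icc a c))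
    {x : ℝ} (hx : x ∈ Icc a c) :
    star (P x) = 1 + ∫ t in a..x, star (P t) * star (Q t) := by
  have hint : IntervalIntegrable (fun t => Q t * P t) volume a x :=
    ((hP.integrableOn_mul hQ).mono_set
      (uIcc_of_le hx.1 ▸ Icc_subset_Icc_right hx.2)).intervalIntegrable
  rw [hP.2 x hx, star_add, star_one]
  congr 1
  simpa using ((starL' ℝ : E ≃L[ℝ] E).toContinuousLinearMap.intervalIntegral_comp_comm hint).symm

theorem star_mul_eq (hP : IsFundamentalSolution Q P a c) (hP' : IsFundamentalSolution Q' P' a c)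
    (hQ : IntegrableOn Q (Icc a c)) (hQ' : IntegrableOn Q' (Icc a c))
    (hskew' : ∀ᵐ t ∂volume.restrict (Icc a c), star (Q' t) = -Q' t)
    {x : ℝ} (hx : x ∈ Icc a c) :
    star (P' x) * P x = 1 + ∫ t in a..x, star (P' t) * (Q t - Q' t) * P t := by
  have hstar : IntegrableOn (fun t => star (P' t) * star (Q' t)) (Icc a c) := by
    simpa [IntegrableOn] using
      (starL' ℝ : E ≃L[ℝ] E).toContinuousLinearMap.integrable_comp (hP'.integrableOn_mul hQ')
  rw [mul_eq_mul_add_intervalIntegral hstar (hP.integrableOn_mul hQ)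
    (fun y hy => hP'.star_eq hQ' hy) hP.2 hx, one_mul]
  congr 1
  refine intervalIntegral.integral_congr_ae ?_
  filter_upwards [(ae_restrict_iff' measurableSet_Icc).1 hskew'] with t ht htx
  rw [uIoc_of_le hx.1] at htx
  rw [ht ⟨htx.1.le, htx.2.trans hx.2⟩]
  noncomm_ring

theorem star_mul_self (hP : IsFundamentalSolution Q P a c) (hQ : IntegrableOn Q (Icc a c))
    (hskew : ∀ᵐ t ∂volume.restrict (Icc a c), star (Q t) = -Q t) {x : ℝ} (hx : x ∈ Icc a c) :
    star (P x) * P x = 1 := by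
  simpa using hP.star_mul_eq hP hQ hQ hskew hx

theorem mem_unitary [IsDedekindFiniteMonoid E] (hP : IsFundamentalSolution Q P a c)
    (hQ : IntegrableOn Q (Icc a c)) (hskew : ∀ᵐ t ∂volume.restrict (Icc a c), star (Q t) = -Q t)
    {x : ℝ} (hx : x ∈ Icc a c) : P x ∈ unitary E :=
  have h := hP.star_mul_self hQ hskew hx
  Unitary.mem_iff.2 ⟨h, mul_eq_one_comm.1 h⟩

theorem norm_mul_star_sub_one_le [CStarRing E] [IsDedekindFiniteMonoid E] {d C : ℝ}
    (hP : IsFundamentalSolution Q P a c) (hP' : IsFundamentalSolution Q' P' a c)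
    (hQ : IntegrableOn Q (Icc a c)) (hQ' : IntegrableOn Q' (Icc a c))
    (hskew : ∀ᵐ t ∂volume.restrict (Icc a c), star (Q t) = -Q t)
    (hskew' : ∀ᵐ t ∂volume.restrict (Icc a c), star (Q' t) = -Q' t)
    (hbd : ∀ᵐ t ∂volume.restrict (Icc a c), ‖Q t‖ ≤ C)
    (hbd' : ∀ᵐ t ∂volume.restrict (Icc a c), ‖Q' t‖ ≤ C)
    (heq : ∀ᵐ t ∂volume.restrict (Icc a d), Q t = Q' t)
    {x : ℝ} (hx : x ∈ Icc a c) (hd : d ∈ Icc a x) :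
    ‖P x * star (P' x) - 1‖ ≤ 2 * C * (x - d) := by
  set f := fun t => star (P' t) * (Q t - Q' t) * P t
  have hf : IntegrableOn f (Icc a c) :=
    ((hQ.sub hQ').continuousOn_mul hP'.1.star isCompact_Icc).mul_continuousOn hP.1 isCompact_Icc
  have hfI : IntervalIntegrable f volume a x :=
    (hf.mono_set (uIcc_of_le hx.1 ▸ Icc_subset_Icc_right hx.2)).intervalIntegrable
  have hvanish : ∫ t in a..d, f t = 0 := by
    refine intervalIntegral.integral_zero_ae ?_
    filter_upwards [(ae_restrict_iff' measurableSet_Icc).1 heq] with t ht htd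
    rw [uIoc_of_le hd.1] at htd
    simp [f, ht (Ioc_subset_Icc_self htd)]
  have hbound : ∀ᵐ t, t ∈ Ι d x → ‖f t‖ ≤ 2 * C := by
    filter_upwards [(ae_restrict_iff' measurableSet_Icc).1 (hbd.and hbd')] with t ht htx
    rw [uIoc_of_le hd.2] at htx
    have htc : t ∈ Icc a c := ⟨hd.1.trans htx.1.le, htx.2.trans hx.2⟩
    calc ‖f t‖ = ‖Q t - Q' t‖ := by
          rw [CStarRing.norm_mul_mem_unitary _ (hP.mem_unitary hQ hskew htc),
            CStarRing.norm_mem_unitary_mul _ (Unitary.star_mem (hP'.mem_unitary hQ' hskew' htc))]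
      _ ≤ ‖Q t‖ + ‖Q' t‖ := norm_sub_le _ _
      _ ≤ 2 * C := by linarith [ht htc]
  rw [norm_mul_star_sub_one_of_mem_unitary (hP'.mem_unitary hQ' hskew' hx),
    hP.star_mul_eq hP' hQ hQ' hskew' hx, add_sub_cancel_left,
    ← intervalIntegral.integral_add_adjacent_intervals (b := d), hvanish, zero_add]
  · calc ‖∫ t in d..x, f t‖ ≤ 2 * C * |x - d| :=
          intervalIntegral.norm_integral_le_of_norm_le_const_ae hbound
      _ = 2 * C * (x - d) := by rw [abs_of_nonneg (sub_nonneg.2 hd.2)]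
  · exact hfI.mono_set (uIcc_subset_uIcc left_mem_uIcc (mem_uIcc_of_le hd.1 hd.2))
  · exact hfI.mono_set (uIcc_subset_uIcc (mem_uIcc_of_le hd.1 hd.2) right_mem_uIcc)

end IsFundamentalSolution

end

theorem omega_close_to_id_general (m : ℕ) (C₀ δ : ℝ)
    (hδ0 : 0 ≤ δ) (hδπ : δ ≤ Real.pi)
    (Q1 Qt1 : ℝ → Matrix (Fin m) (Fin m) ℂ)
    (hQ1int : IntegrableOn Q1 (Icc 0 Real.pi))
    (hQt1int : IntegrableOn Qt1 (Icc 0 Real.pi))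
    (hQ1skew : ∀ᵐ x ∂(volume.restrict (Icc 0 Real.pi)), (Q1 x)ᴴ = -Q1 x)
    (hQt1skew : ∀ᵐ x ∂(volume.restrict (Icc 0 Real.pi)), (Qt1 x)ᴴ = -Qt1 x)
    (hQ1bd : ∀ᵐ x ∂(volume.restrict (Icc 0 Real.pi)), ‖Q1 x‖ ≤ C₀)
    (hQt1bd : ∀ᵐ x ∂(volume.restrict (Icc 0 Real.pi)), ‖Qt1 x‖ ≤ C₀)
    (heq : ∀ᵐ x ∂(volume.restrict (Icc 0 δ)), Q1 x = Qt1 x)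
    (Pp Pm Ptp Ptm : ℝ → Matrix (Fin m) (Fin m) ℂ)
    (hPpc : ContinuousOn Pp (Icc 0 Real.pi))
    (hPp : ∀ x ∈ Icc 0 Real.pi, Pp x = 1 + ∫ t in (0:ℝ)..x, Q1 t * Pp t)
    (hPmc : ContinuousOn Pm (Icc 0 Real.pi))
    (hPm : ∀ x ∈ Icc 0 Real.pi, Pm x = 1 - ∫ t in (0:ℝ)..x, Q1 t * Pm t)
    (hPtpc : ContinuousOn Ptp (Icc 0 Real.pi))
    (hPtp : ∀ x ∈ Icc 0 Real.pi, Ptp x = 1 + ∫ t in (0:ℝ)..x, Qt1 t * Ptp t)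
    (hPtmc : ContinuousOn Ptm (Icc 0 Real.pi))
    (hPtm : ∀ x ∈ Icc 0 Real.pi, Ptm x = 1 - ∫ t in (0:ℝ)..x, Qt1 t * Ptm t)
    (Ω : ℝ → Matrix (Fin m) (Fin m) ℂ)
    (hΩ : ∀ x, Ω x = ((1:ℂ)/2) • (Pm x * (Ptm x)ᴴ + Pp x * (Ptp x)ᴴ)) :
    (∀ x ∈ Icc 0 δ, Ω x = 1) ∧
    (∀ x ∈ Icc δ Real.pi, ‖Ω x - 1‖ ≤ 2 * C₀ * (x - δ)) := by
  have Fm := IsFundamentalSolution.of_eq_one_sub hPmc hPm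
  have Ftm := IsFundamentalSolution.of_eq_one_sub hPtmc hPtm
  have est : ∀ x ∈ Icc 0 Real.pi, ∀ d ∈ Icc 0 x,
      (∀ᵐ t ∂volume.restrict (Icc 0 d), Q1 t = Qt1 t) → ‖Ω x - 1‖ ≤ 2 * C₀ * (x - d) := by
    intro x hx d hd hQd
    have hm := Fm.norm_mul_star_sub_one_le Ftm hQ1int.neg hQt1int.neg
      (hQ1skew.mono fun t ht => by simp [star_eq_conjTranspose, ht])
      (hQt1skew.mono fun t ht => by simp [star_eq_conjTranspose, ht])
      (by simpa using hQ1bd) (by simpa using hQt1bd) (hQd.mono fun t ht => by simp [ht]) hx hd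
    have hp := IsFundamentalSolution.norm_mul_star_sub_one_le ⟨hPpc, hPp⟩ ⟨hPtpc, hPtp⟩
      hQ1int hQt1int hQ1skew hQt1skew hQ1bd hQt1bd hQd hx hd
    calc ‖Ω x - 1‖
        = ‖((1:ℂ)/2) • ((Pm x * star (Ptm x) - 1) + (Pp x * star (Ptp x) - 1))‖ := by
          rw [hΩ x]; congr 1; module
      _ ≤ 1/2 * (‖Pm x * star (Ptm x) - 1‖ + ‖Pp x * star (Ptp x) - 1‖) := by
          rw [norm_smul, show ‖(1:ℂ)/2‖ = 1/2 by norm_num]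
          exact mul_le_mul_of_nonneg_left (norm_add_le _ _) (by norm_num)
      _ ≤ 2 * C₀ * (x - d) := by linarith
  refine ⟨fun x hx => ?_, fun x hx => est x ⟨hδ0.trans hx.1, hx.2⟩ δ ⟨hδ0, hx.1⟩ heq⟩
  have h := est x ⟨hx.1, hx.2.trans hδπ⟩ x ⟨hx.1, le_rfl⟩
    (ae_restrict_of_ae_restrict_of_subset (Icc_subset_Icc_right hx.2) heq)
  rwa [sub_self, mul_zero, norm_le_zero_iff, sub_eq_zero] at h

/-- If `Q₁, Q̃₁` are integrable, anti-Hermitian a.e., bounded by `C₀` in the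
operator norm a.e., and coincide a.e. on `[0,δ]`, and `P₊, P₋, P̃₊, P̃₋` are the corresponding
absolutely continuous solutions of `P±' = ±Q₁P±`, `P̃±' = ±Q̃₁P̃±` with value `I` at `0`
(encoded by integral equations), then `Ω(x) := ½(P₋(x)P̃₋(x)ᴴ + P₊(x)P̃₊(x)ᴴ)` equals `I`
on `[0,δ]` and `‖Ω(x) - I‖ ≤ 2C₀(x - δ)` on `[δ,π]` (operator norm). -/
theorem omega_close_to_id (m : ℕ) (hm : 1 ≤ m) (C₀ δ : ℝ)
    (hC₀ : 0 < C₀) (hδ0 : 0 ≤ δ) (hδπ : δ ≤ Real.pi)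
    (Q1 Qt1 : ℝ → Matrix (Fin m) (Fin m) ℂ)
    (hQ1int : IntegrableOn Q1 (Icc 0 Real.pi))
    (hQt1int : IntegrableOn Qt1 (Icc 0 Real.pi))
    (hQ1skew : ∀ᵐ x ∂(volume.restrict (Icc 0 Real.pi)), (Q1 x)ᴴ = -Q1 x)
    (hQt1skew : ∀ᵐ x ∂(volume.restrict (Icc 0 Real.pi)), (Qt1 x)ᴴ = -Qt1 x)
    (hQ1bd : ∀ᵐ x ∂(volume.restrict (Icc 0 Real.pi)), ‖Q1 x‖ ≤ C₀)
    (hQt1bd : ∀ᵐ x ∂(volume.restrict (Icc 0 Real.pi)), ‖Qt1 x‖ ≤ C₀)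
    (heq : ∀ᵐ x ∂(volume.restrict (Icc 0 δ)), Q1 x = Qt1 x)
    (Pp Pm Ptp Ptm : ℝ → Matrix (Fin m) (Fin m) ℂ)
    (hPpc : ContinuousOn Pp (Icc 0 Real.pi)) (hPp0 : Pp 0 = 1)
    (hPp : ∀ x ∈ Icc 0 Real.pi, Pp x = 1 + ∫ t in (0:ℝ)..x, Q1 t * Pp t)
    (hPmc : ContinuousOn Pm (Icc 0 Real.pi)) (hPm0 : Pm 0 = 1)
    (hPm : ∀ x ∈ Icc 0 Real.pi, Pm x = 1 - ∫ t in (0:ℝ)..x, Q1 t * Pm t)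
    (hPtpc : ContinuousOn Ptp (Icc 0 Real.pi)) (hPtp0 : Ptp 0 = 1)
    (hPtp : ∀ x ∈ Icc 0 Real.pi, Ptp x = 1 + ∫ t in (0:ℝ)..x, Qt1 t * Ptp t)
    (hPtmc : ContinuousOn Ptm (Icc 0 Real.pi)) (hPtm0 : Ptm 0 = 1)
    (hPtm : ∀ x ∈ Icc 0 Real.pi, Ptm x = 1 - ∫ t in (0:ℝ)..x, Qt1 t * Ptm t)
    (Ω : ℝ → Matrix (Fin m) (Fin m) ℂ)
    (hΩ : ∀ x, Ω x = ((1:ℂ)/2) • (Pm x * (Ptm x)ᴴ + Pp x * (Ptp x)ᴴ)) :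
    (∀ x ∈ Icc 0 δ, Ω x = 1) ∧
    (∀ x ∈ Icc δ Real.pi, ‖Ω x - 1‖ ≤ 2 * C₀ * (x - δ)) :=
  omega_close_to_id_general m C₀ δ hδ0 hδπ Q1 Qt1 hQ1int hQt1int hQ1skew hQt1skew hQ1bd hQt1bd heq
    Pp Pm Ptp Ptm hPpc hPp hPmc hPm hPtpc hPtp hPtmc hPtm Ω hΩ
end
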